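/- arXiv:2105.00834 — 7 statements merged into one kernel-verified Lean document; each statement's English description precedes it below -/
import Mathlib

section
/- One-step maximum principle at the first cell of an outgoing road: if 0 ≤ ρ_j ≤ ρ_max for all j ≥ 0, the inflow F_{−1} satisfies 0 ≤ F_{−1} ≤ ρ_max V^out_{−1}, and λ > 0 satisfies λ ≤ 1/(γ₀ ‖v'‖ ρ_max + 2‖v‖) with ‖v‖ = sup v, then the updated value ρ₀' = ρ₀ − λ(ρ₀ V^out₀ − F_{−1}) satisfies 0 ≤ ρ₀' ≤ ρ_max. -/
open MeasureTheory

lemma abel_aux (N : ℕ) (hN : 0 < N) (a b : ℕ → ℝ)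
    (ha : ∀ i, i + 1 < N → a (i + 1) ≤ a i)
    (ha0 : ∀ i, i < N → 0 ≤ a i)
    (hb : ∀ i, i ≤ N → 0 ≤ b i) :
    ∑ i ∈ Finset.range N, a i * b i - ∑ i ∈ Finset.range N, a i * b (i + 1)
      ≤ a 0 * b 0 := by
  obtain ⟨m, rfl⟩ := Nat.exists_eq_succ_of_ne_zero hN.ne'
  rw [Finset.sum_range_succ' (fun i => a i * b i) m,
    Finset.sum_range_succ (fun i => a i * b (i + 1)) m]
  have h1 : ∑ i ∈ Finset.range m, a (i + 1) * b (i + 1)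
      ≤ ∑ i ∈ Finset.range m, a i * b (i + 1) :=
    Finset.sum_le_sum fun i hi =>
      mul_le_mul_of_nonneg_right (ha i (by simp at hi; omega))
        (hb (i + 1) (by simp at hi; omega))
  have h2 : 0 ≤ a m * b (m + 1) :=
    mul_nonneg (ha0 m (by omega)) (hb (m + 1) (by omega))
  linarith

lemma sum_Icc_int_eq (N : ℕ) (f : ℤ → ℝ) :
    ∑ k ∈ Finset.Icc (0 : ℤ) ((N : ℤ) - 1), f k
      = ∑ i ∈ Finset.range N, f (i : ℤ) := by
  induction N with
  | zero => simp
  | succ n ih =>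
      rw [Finset.sum_range_succ, ← ih]
      have hset : Finset.Icc (0 : ℤ) (((n : ℕ) + 1 : ℕ) - 1 : ℤ)
          = insert (n : ℤ) (Finset.Icc 0 ((n : ℤ) - 1)) := by
        ext k; simp; omega
      push_cast at hset ⊢
      rw [hset, Finset.sum_insert (by simp)]
      ring

/-- One-step maximum principle at the first cell of an outgoing road:
if `0 ≤ ρ_j ≤ ρ_max` for all `j ≥ 0`, the inflow `F₋₁` satisfies
`0 ≤ F₋₁ ≤ ρ_max V^out₋₁`, and `λ > 0` satisfies `λ ≤ 1/(γ₀ ‖v'‖ ρ_max + 2‖v‖)`, then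
the updated value `ρ₀' = ρ₀ - λ(ρ₀ V^out₀ - F₋₁)` satisfies `0 ≤ ρ₀' ≤ ρ_max`. -/
theorem stmt_9
    (ρmax : ℝ) (hρmax : 0 < ρmax)
    (v : ℝ → ℝ)
    (hv : ContDiffOn ℝ 2 v (Set.Icc 0 ρmax))
    (hvmono : AntitoneOn v (Set.Icc 0 ρmax))
    (hvnn : ∀ x ∈ Set.Icc (0 : ℝ) ρmax, 0 ≤ v x)
    (hvmax : v ρmax = 0)
    (nv nvd : ℝ)
    (hnv : nv = sSup (v '' Set.Icc 0 ρmax))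
    (hnvd : nvd = sSup ((fun x => |deriv v x|) '' Set.Icc 0 ρmax))
    (η Δx : ℝ) (hη : 0 < η) (hΔx : 0 < Δx)
    (Nη : ℕ) (hNη : 0 < Nη) (hηN : η = (Nη : ℝ) * Δx)
    (ω : ℝ → ℝ)
    (hω : ContDiffOn ℝ 1 ω (Set.Icc 0 η))
    (hωmono : AntitoneOn ω (Set.Icc 0 η))
    (hωnn : ∀ x ∈ Set.Icc (0 : ℝ) η, 0 ≤ ω x)
    (hωint : (∫ x in (0 : ℝ)..η, ω x) = 1)
    (γ : ℤ → ℝ)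
    (hγ : ∀ k : ℤ, 0 ≤ k → k ≤ (Nη : ℤ) - 1 →
      γ k = ∫ x in ((k : ℝ) * Δx)..(((k : ℝ) + 1) * Δx), ω x)
    (ρ : ℤ → ℝ)
    (hρ : ∀ j : ℤ, 0 ≤ j → ρ j ∈ Set.Icc 0 ρmax)
    (hρneg : ∀ j : ℤ, j < 0 → ρ j = 0)
    (Vout : ℤ → ℝ)
    (hVout : ∀ j : ℤ,
      Vout j = ∑ k ∈ Finset.Icc (max (-j - 1) 0) ((Nη : ℤ) - 1),
        γ k * v (ρ (j + k + 1)))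
    (Fm1 : ℝ) (hFm1 : 0 ≤ Fm1 ∧ Fm1 ≤ ρmax * Vout (-1))
    (lam : ℝ) (hlam : 0 < lam)
    (hCFL : lam ≤ 1 / (γ 0 * nvd * ρmax + 2 * nv)) :
    0 ≤ ρ 0 - lam * (ρ 0 * Vout 0 - Fm1) ∧
      ρ 0 - lam * (ρ 0 * Vout 0 - Fm1) ≤ ρmax := by
  obtain ⟨hF0, hFw⟩ := hFm1
  have hmem0 : (0 : ℝ) ∈ Set.Icc (0 : ℝ) ρmax := ⟨le_refl 0, hρmax.le⟩
  have hvc : ContinuousOn v (Set.Icc 0 ρmax) := hv.continuousOn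
  -- bounds from nv
  have hbddv : BddAbove (v '' Set.Icc 0 ρmax) :=
    (isCompact_Icc.image_of_continuousOn hvc).bddAbove
  have hnv_ub : ∀ x ∈ Set.Icc (0 : ℝ) ρmax, v x ≤ nv := by
    intro x hx; rw [hnv]; exact le_csSup hbddv ⟨x, hx, rfl⟩
  have hnv0 : 0 ≤ nv := by
    have := hnv_ub ρmax ⟨hρmax.le, le_rfl⟩; rwa [hvmax] at this
  -- bounds from nvd
  have hUD : UniqueDiffOn ℝ (Set.Icc (0 : ℝ) ρmax) := uniqueDiffOn_Icc hρmax
  have hgc : ContinuousOn (derivWithin v (Set.Icc (0 : ℝ) ρmax)) (Set.Icc 0 ρmax) :=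
    hv.continuousOn_derivWithin hUD one_le_two
  obtain ⟨M, hM⟩ := (isCompact_Icc.image_of_continuousOn
    (continuous_abs.comp_continuousOn hgc)).bddAbove
  have hbddS : BddAbove ((fun x => |deriv v x|) '' Set.Icc 0 ρmax) := by
    refine ⟨max M (max |deriv v 0| |deriv v ρmax|), ?_⟩
    rintro y ⟨x, hx, rfl⟩
    rcases eq_or_lt_of_le hx.1 with h0 | h0
    · rw [← h0]; exact le_max_of_le_right (le_max_left _ _)
    rcases eq_or_lt_of_le hx.2 with h1 | h1
    · rw [h1]; exact le_max_of_le_right (le_max_right _ _)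
    · have hnhds : Set.Icc (0 : ℝ) ρmax ∈ nhds x := Icc_mem_nhds h0 h1
      have heq : deriv v x = derivWithin v (Set.Icc (0 : ℝ) ρmax) x :=
        (derivWithin_of_mem_nhds hnhds).symm
      simp only [heq]
      exact le_max_of_le_left (hM ⟨x, hx, rfl⟩)
  have hnvd_ub : ∀ x ∈ Set.Icc (0 : ℝ) ρmax, |deriv v x| ≤ nvd := by
    intro x hx; rw [hnvd]; exact le_csSup hbddS ⟨x, hx, rfl⟩
  have hnvd0 : 0 ≤ nvd := le_trans (abs_nonneg _) (hnvd_ub 0 hmem0)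
  -- Lipschitz-type bound
  have hlip : ∀ x ∈ Set.Icc (0 : ℝ) ρmax, v x ≤ nvd * (ρmax - x) := by
    intro x hx
    rcases eq_or_lt_of_le hx.2 with h | h
    · rw [h, hvmax]; simp
    · have hcont : ContinuousOn v (Set.Icc x ρmax) :=
        hvc.mono (Set.Icc_subset_Icc hx.1 le_rfl)
      have hdiff : DifferentiableOn ℝ v (Set.Ioo x ρmax) := by
        intro y hy
        have hy0 : (0 : ℝ) < y := lt_of_le_of_lt hx.1 hy.1
        have hymem : y ∈ Set.Icc (0 : ℝ) ρmax := ⟨hy0.le, hy.2.le⟩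
        have hnhds : Set.Icc (0 : ℝ) ρmax ∈ nhds y := Icc_mem_nhds hy0 hy.2
        exact (((hv.differentiableOn two_ne_zero) y hymem).differentiableAt
          hnhds).differentiableWithinAt
      obtain ⟨c, hc, hc'⟩ := exists_deriv_eq_slope v h hcont hdiff
      have hcmem : c ∈ Set.Icc (0 : ℝ) ρmax :=
        ⟨le_of_lt (lt_of_le_of_lt hx.1 hc.1), hc.2.le⟩
      have hxne : (0 : ℝ) < ρmax - x := sub_pos.mpr h
      have hvx : v x = -deriv v c * (ρmax - x) := by
        rw [hc', hvmax]; field_simp; ring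
      rw [hvx]
      exact mul_le_mul_of_nonneg_right
        ((neg_le_abs _).trans (hnvd_ub c hcmem)) hxne.le
  -- ρ is in [0, ρmax] everywhere (using hρneg for negative indices)
  have hρmem : ∀ k : ℤ, ρ k ∈ Set.Icc (0 : ℝ) ρmax := by
    intro k
    rcases lt_or_ge k 0 with h | h
    · rw [hρneg k h]; exact hmem0
    · exact hρ k h
  -- γ facts
  have hsubI : ∀ i : ℕ, i < Nη →
      Set.Icc ((i : ℝ) * Δx) (((i : ℝ) + 1) * Δx) ⊆ Set.Icc 0 η := by
    intro i hi u hu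
    have h1 : (0 : ℝ) ≤ (i : ℝ) * Δx := by positivity
    have h2 : ((i : ℝ) + 1) * Δx ≤ η := by
      rw [hηN]
      apply mul_le_mul_of_nonneg_right _ hΔx.le
      exact_mod_cast hi
    exact ⟨le_trans h1 hu.1, le_trans hu.2 h2⟩
  have hγcast : ∀ i : ℕ, i < Nη →
      γ (i : ℤ) = ∫ x in ((i : ℝ) * Δx)..(((i : ℝ) + 1) * Δx), ω x := by
    intro i hi
    have := hγ (i : ℤ) (by positivity) (by omega)
    rwa [show (((i : ℤ) : ℝ)) = (i : ℝ) by push_cast; ring] at this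
  have hγnn : ∀ i : ℕ, i < Nη → 0 ≤ γ (i : ℤ) := by
    intro i hi
    rw [hγcast i hi]
    apply intervalIntegral.integral_nonneg (by nlinarith)
    intro u hu
    exact hωnn u (hsubI i hi hu)
  have hγ0 : 0 ≤ γ 0 := by
    have := hγnn 0 hNη; simpa using this
  have hint : ∀ i : ℕ, i < Nη →
      IntervalIntegrable ω volume ((i : ℝ) * Δx) (((i : ℝ) + 1) * Δx) := by
    intro i hi
    apply ContinuousOn.intervalIntegrable
    apply hω.continuousOn.mono
    rw [Set.uIcc_of_le (by nlinarith)]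
    exact hsubI i hi
  have hγsum : ∑ i ∈ Finset.range Nη, γ (i : ℤ) = 1 := by
    have hadj : ∀ k < Nη, IntervalIntegrable ω volume
        ((fun i : ℕ => (i : ℝ) * Δx) k) ((fun i : ℕ => (i : ℝ) * Δx) (k + 1)) := by
      intro k hk
      have := hint k hk
      simpa [Nat.cast_add, Nat.cast_one, add_mul, one_mul] using this
    have hsum := intervalIntegral.sum_integral_adjacent_intervals hadj
    simp only [Nat.cast_zero, zero_mul] at hsum
    calc ∑ i ∈ Finset.range Nη, γ (i : ℤ)
        = ∑ i ∈ Finset.range Nη,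
          ∫ x in ((i : ℝ) * Δx)..(((i : ℝ) + 1) * Δx), ω x :=
          Finset.sum_congr rfl fun i hi => hγcast i (Finset.mem_range.mp hi)
      _ = ∫ x in (0 : ℝ)..((Nη : ℝ) * Δx), ω x := by
          rw [← hsum]
          apply Finset.sum_congr rfl
          intro i _
          congr 1
          push_cast; ring
      _ = 1 := by rw [← hηN, hωint]
  have hγmono : ∀ i : ℕ, i + 1 < Nη → γ (((i + 1 : ℕ) : ℤ)) ≤ γ ((i : ℕ) : ℤ) := by
    intro i hi
    rw [hγcast (i + 1) hi, hγcast i (by omega)]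
    have key : ∫ x in ((i : ℝ) * Δx)..(((i : ℝ) + 1) * Δx), ω (x + Δx)
        = ∫ x in (((i + 1 : ℕ) : ℝ) * Δx)..((((i + 1 : ℕ) : ℝ) + 1) * Δx), ω x := by
      rw [intervalIntegral.integral_comp_add_right]
      congr 1 <;> push_cast <;> ring
    rw [← key]
    apply intervalIntegral.integral_mono_on (by nlinarith)
    · -- integrability of shifted ω
      apply ContinuousOn.intervalIntegrable
      apply ContinuousOn.comp hω.continuousOn
        ((continuous_add_right Δx).continuousOn)
      rw [Set.uIcc_of_le (by nlinarith)]
      intro u hu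
      apply hsubI (i + 1) hi
      simp only [Set.mem_Icc] at hu ⊢
      push_cast
      constructor <;> [linarith [hu.1]; linarith [hu.2]]
    · exact hint i (by omega)
    · intro x hx
      have hx1 : x ∈ Set.Icc (0 : ℝ) η := hsubI i (by omega) hx
      have hx2 : x + Δx ∈ Set.Icc (0 : ℝ) η := by
        apply hsubI (i + 1) hi
        simp only [Set.mem_Icc] at hx ⊢
        push_cast
        constructor <;> [linarith [hx.1]; linarith [hx.2]]
      exact hωmono hx1 hx2 (by linarith [hΔx.le])
  -- expressions for Vout
  have hVm1 : Vout (-1) = ∑ i ∈ Finset.range Nη, γ (i : ℤ) * v (ρ (i : ℤ)) := by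
    rw [hVout]
    have h1 : (max (-(-1 : ℤ) - 1) 0) = (0 : ℤ) := by norm_num
    rw [h1, sum_Icc_int_eq Nη (fun k => γ k * v (ρ (-1 + k + 1)))]
    apply Finset.sum_congr rfl
    intro i _
    congr 2
    ring
  have hV0 : Vout 0 = ∑ i ∈ Finset.range Nη, γ (i : ℤ) * v (ρ ((i : ℤ) + 1)) := by
    rw [hVout]
    have h1 : (max (-(0 : ℤ) - 1) 0) = (0 : ℤ) := by norm_num
    rw [h1, sum_Icc_int_eq Nη (fun k => γ k * v (ρ (0 + k + 1)))]
    apply Finset.sum_congr rfl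
    intro i _
    congr 2
    ring
  -- bounds on Vout 0 and Vout (-1)
  have hterm : ∀ (c : ℤ → ℤ),
      (∑ i ∈ Finset.range Nη, γ (i : ℤ) * v (ρ (c i)) ≤ nv) ∧
      (0 ≤ ∑ i ∈ Finset.range Nη, γ (i : ℤ) * v (ρ (c i))) := by
    intro c
    constructor
    · calc ∑ i ∈ Finset.range Nη, γ (i : ℤ) * v (ρ (c i))
          ≤ ∑ i ∈ Finset.range Nη, γ (i : ℤ) * nv :=
            Finset.sum_le_sum fun i hi =>
              mul_le_mul_of_nonneg_left (hnv_ub _ (hρmem _))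
                (hγnn i (Finset.mem_range.mp hi))
        _ = (∑ i ∈ Finset.range Nη, γ (i : ℤ)) * nv := by rw [Finset.sum_mul]
        _ = nv := by rw [hγsum, one_mul]
    · apply Finset.sum_nonneg
      intro i hi
      exact mul_nonneg (hγnn i (Finset.mem_range.mp hi)) (hvnn _ (hρmem _))
  have hs_nv : Vout 0 ≤ nv := by rw [hV0]; exact (hterm (fun i => i + 1)).1
  have hs0 : 0 ≤ Vout 0 := by rw [hV0]; exact (hterm (fun i => i + 1)).2
  have hw_nv : Vout (-1) ≤ nv := by rw [hVm1]; exact (hterm (fun i => i)).1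
  have hw0 : 0 ≤ Vout (-1) := by rw [hVm1]; exact (hterm (fun i => i)).2
  -- Abel-summation bound
  have hws : Vout (-1) - Vout 0 ≤ γ 0 * v (ρ 0) := by
    have habel := abel_aux Nη hNη (fun i => γ (i : ℤ)) (fun i => v (ρ (i : ℤ)))
      (fun i hi => hγmono i hi)
      (fun i hi => hγnn i hi)
      (fun i _ => hvnn _ (hρmem _))
    simp only [Nat.cast_zero] at habel
    have heq : ∑ i ∈ Finset.range Nη, γ (i : ℤ) * v (ρ (((i + 1 : ℕ) : ℤ)))
        = ∑ i ∈ Finset.range Nη, γ (i : ℤ) * v (ρ ((i : ℤ) + 1)) := by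
      apply Finset.sum_congr rfl
      intro i _
      have hci : (((i + 1 : ℕ) : ℤ)) = (i : ℤ) + 1 := by push_cast; ring
      rw [hci]
    rw [hVm1, hV0, ← heq]
    exact habel
  -- CFL consequences
  have hD : 0 < γ 0 * nvd * ρmax + 2 * nv := by
    by_contra h
    push_neg at h
    have : 1 / (γ 0 * nvd * ρmax + 2 * nv) ≤ 0 := one_div_nonpos.mpr h
    linarith
  have hlD : lam * (γ 0 * nvd * ρmax + 2 * nv) ≤ 1 := (le_div_iff₀ hD).mp hCFL
  have hρ0 := hρmem 0
  have hvR : 0 ≤ v (ρ 0) := hvnn _ hρ0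
  have hlipR : v (ρ 0) ≤ nvd * (ρmax - ρ 0) := hlip _ hρ0
  have hsub : 0 ≤ ρmax - ρ 0 := sub_nonneg.mpr hρ0.2
  -- λ s ≤ 1
  have hls1 : lam * Vout 0 ≤ 1 := by
    calc lam * Vout 0 ≤ lam * nv := mul_le_mul_of_nonneg_left hs_nv hlam.le
      _ ≤ lam * (γ 0 * nvd * ρmax + 2 * nv) := by
          apply mul_le_mul_of_nonneg_left _ hlam.le
          nlinarith [mul_nonneg (mul_nonneg hγ0 hnvd0) hρmax.le]
      _ ≤ 1 := hlD
  constructor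
  · -- lower bound
    linarith [mul_nonneg hρ0.1 (sub_nonneg.mpr hls1), mul_nonneg hlam.le hF0]
  · -- upper bound
    have e2 : (ρmax - ρ 0) * Vout (-1) ≤ (ρmax - ρ 0) * nv :=
      mul_le_mul_of_nonneg_left hw_nv hsub
    have e3 : ρ 0 * (Vout (-1) - Vout 0) ≤ ρmax * (γ 0 * (nvd * (ρmax - ρ 0))) := by
      calc ρ 0 * (Vout (-1) - Vout 0) ≤ ρ 0 * (γ 0 * v (ρ 0)) :=
            mul_le_mul_of_nonneg_left hws hρ0.1
        _ ≤ ρmax * (γ 0 * v (ρ 0)) :=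
            mul_le_mul_of_nonneg_right hρ0.2 (mul_nonneg hγ0 hvR)
        _ ≤ ρmax * (γ 0 * (nvd * (ρmax - ρ 0))) :=
            mul_le_mul_of_nonneg_left
              (mul_le_mul_of_nonneg_left hlipR hγ0) hρmax.le
    have e4 : ρmax * Vout (-1) - ρ 0 * Vout 0
        ≤ (ρmax - ρ 0) * (nv + γ 0 * nvd * ρmax) := by
      linarith [e2, e3]
    have e5 : lam * (nv + γ 0 * nvd * ρmax) ≤ 1 := by
      calc lam * (nv + γ 0 * nvd * ρmax)
          ≤ lam * (γ 0 * nvd * ρmax + 2 * nv) := by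
            apply mul_le_mul_of_nonneg_left _ hlam.le
            linarith
        _ ≤ 1 := hlD
    have key : lam * (ρmax * Vout (-1) - ρ 0 * Vout 0) ≤ ρmax - ρ 0 := by
      calc lam * (ρmax * Vout (-1) - ρ 0 * Vout 0)
          ≤ lam * ((ρmax - ρ 0) * (nv + γ 0 * nvd * ρmax)) :=
            mul_le_mul_of_nonneg_left e4 hlam.le
        _ = (ρmax - ρ 0) * (lam * (nv + γ 0 * nvd * ρmax)) := by ring
        _ ≤ (ρmax - ρ 0) * 1 := mul_le_mul_of_nonneg_left e5 hsub
        _ = ρmax - ρ 0 := mul_one _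
    have hF' : lam * Fm1 ≤ lam * (ρmax * Vout (-1)) :=
      mul_le_mul_of_nonneg_left hFw hlam.le
    linarith [key, hF']
end

section
/- Pointwise limit of the outgoing nonlocal velocity on the outgoing road as the nonlocal range tends to infinity: let u : (0,∞) → [0,ρ_max] be measurable and either identically zero or having compact support contained in [0,∞). Then for every fixed x > 0, the outgoing nonlocal velocity W_η(x) = ∫_x^{x+η} v(u(y)) ω_η(y−x) dy satisfies lim_{η→∞} W_η(x) = v(0). -/
open MeasureTheory Filter

/-- Pointwise limit of the outgoing nonlocal velocity on the outgoing
road as the nonlocal range tends to infinity: for `u : (0,∞) → [0,ρmax]` measurable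
which is either identically zero or has compact support contained in `[0,∞)`, and every
fixed `x > 0`, `W_η(x) = ∫_x^{x+η} v(u(y)) ω_η(y-x) dy → v(0)` as `η → ∞`. -/
theorem stmt_11
    (ρmax : ℝ) (hρmax : 0 < ρmax)
    (v : ℝ → ℝ)
    (hv : ContDiffOn ℝ 2 v (Set.Icc 0 ρmax))
    (hvmono : AntitoneOn v (Set.Icc 0 ρmax))
    (hvnn : ∀ x ∈ Set.Icc (0 : ℝ) ρmax, 0 ≤ v x)
    (hvmax : v ρmax = 0)
    (ω : ℝ → ℝ → ℝ)
    (hω : ∀ η : ℝ, 0 < η → ContDiffOn ℝ 1 (ω η) (Set.Icc 0 η))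
    (hωmono : ∀ η : ℝ, 0 < η → AntitoneOn (ω η) (Set.Icc 0 η))
    (hωnn : ∀ η : ℝ, 0 < η → ∀ x ∈ Set.Icc (0 : ℝ) η, 0 ≤ ω η x)
    (hωint : ∀ η : ℝ, 0 < η → (∫ x in (0 : ℝ)..η, ω η x) = 1)
    (hω0 : Tendsto (fun η => ω η 0) atTop (nhds 0))
    (u : ℝ → ℝ) (hu_meas : Measurable u)
    (hu_range : ∀ y : ℝ, 0 < y → u y ∈ Set.Icc 0 ρmax)
    (hu_supp : (∀ y : ℝ, 0 < y → u y = 0) ∨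
      (∃ b : ℝ, 0 ≤ b ∧ ∀ y : ℝ, b < y → u y = 0))
    (x : ℝ) (hx : 0 < x) :
    Tendsto (fun η : ℝ => ∫ y in x..(x + η), v (u y) * ω η (y - x))
      atTop (nhds (v 0)) := by
  -- unify the support hypotheses
  obtain ⟨b, hb0, hb⟩ : ∃ b : ℝ, 0 ≤ b ∧ ∀ y : ℝ, b < y → u y = 0 := by
    rcases hu_supp with h | h
    · exact ⟨0, le_refl 0, fun y hy => h y hy⟩
    · exact h
  have hρ0 : (0:ℝ) ∈ Set.Icc (0:ℝ) ρmax := ⟨le_refl 0, hρmax.le⟩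
  have hv0 : 0 ≤ v 0 := hvnn 0 hρ0
  -- modify u outside (0,∞)
  set u' : ℝ → ℝ := fun y => if 0 < y then u y else 0 with hu'
  have hu'range : ∀ y, u' y ∈ Set.Icc (0:ℝ) ρmax := by
    intro y
    by_cases hy : 0 < y
    · simp only [hu', if_pos hy]; exact hu_range y hy
    · simp only [hu', if_neg hy]; exact hρ0
  have hu'meas : Measurable u' := Measurable.ite measurableSet_Ioi hu_meas measurable_const
  have hvu'meas : Measurable (fun y => v (u' y)) := by
    have h1 : Continuous ((Set.Icc (0:ℝ) ρmax).restrict v) := hv.continuousOn.restrict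
    exact h1.measurable.comp (hu'meas.subtype_mk (h := fun y => hu'range y))
  have hvu'bd : ∀ y, v (u' y) ∈ Set.Icc 0 (v 0) := fun y =>
    ⟨hvnn _ (hu'range y), hvmono hρ0 (hu'range y) (hu'range y).1⟩
  set C : ℝ := max (b - x) 0 with hC
  have hC0 : 0 ≤ C := le_max_right _ _
  have hbC : b ≤ x + C := by
    have : b - x ≤ C := le_max_left _ _
    linarith
  -- the key bound for each η > 0
  have key : ∀ η : ℝ, 0 < η →
      ‖(∫ y in x..(x+η), v (u y) * ω η (y - x)) - v 0‖ ≤ v 0 * ω η 0 * C := by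
    intro η hη
    have hxle : x ≤ x + η := by linarith
    have hω00 : 0 ≤ ω η 0 := hωnn η hη 0 ⟨le_refl 0, hη.le⟩
    have hωle : ∀ t ∈ Set.Icc (0:ℝ) η, ω η t ≤ ω η 0 := fun t ht =>
      hωmono η hη ⟨le_refl 0, hη.le⟩ ht ht.1
    have hωnn' : ∀ t ∈ Set.Icc (0:ℝ) η, 0 ≤ ω η t := hωnn η hη
    -- replace u by u'
    have hcong : (∫ y in x..(x+η), v (u y) * ω η (y - x))
        = ∫ y in x..(x+η), v (u' y) * ω η (y - x) := by
      apply intervalIntegral.integral_congr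
      intro y hy
      rw [Set.uIcc_of_le hxle] at hy
      have : 0 < y := lt_of_lt_of_le hx hy.1
      simp only [hu', if_pos this]
    -- continuity of shifted ω
    have hgcont : ContinuousOn (fun y => ω η (y - x)) (Set.Icc x (x+η)) := by
      apply (hω η hη).continuousOn.comp ((continuous_id.sub continuous_const).continuousOn)
      intro y hy
      simp only [Pi.sub_apply, id_eq, Set.mem_Icc]
      exact ⟨by linarith [hy.1], by linarith [hy.2]⟩
    -- integrability of the main integrand
    have hbound : ∀ y ∈ Set.Ioc x (x+η), ‖v (u' y) * ω η (y - x)‖ ≤ v 0 * ω η 0 := by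
      intro y hy
      have hyx : (y - x) ∈ Set.Icc (0:ℝ) η := ⟨by linarith [hy.1], by linarith [hy.2]⟩
      rw [norm_mul, Real.norm_eq_abs, Real.norm_eq_abs,
        abs_of_nonneg (hvu'bd y).1, abs_of_nonneg (hωnn' _ hyx)]
      exact mul_le_mul (hvu'bd y).2 (hωle _ hyx) (hωnn' _ hyx) hv0
    have hFint : IntervalIntegrable (fun y => v (u' y) * ω η (y - x)) volume x (x+η) := by
      rw [intervalIntegrable_iff_integrableOn_Ioc_of_le hxle]
      apply Integrable.mono' (integrable_const (v 0 * ω η 0))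
      · exact (hvu'meas.aestronglyMeasurable).mul
          ((hgcont.mono Set.Ioc_subset_Icc_self).aestronglyMeasurable measurableSet_Ioc)
      · filter_upwards [ae_restrict_mem measurableSet_Ioc] with y hy using hbound y hy
    have hGint : IntervalIntegrable (fun y => v 0 * ω η (y - x)) volume x (x+η) := by
      apply ContinuousOn.intervalIntegrable
      rw [Set.uIcc_of_le hxle]
      exact continuousOn_const.mul hgcont
    -- the constant part integrates to v 0
    have hconst : (∫ y in x..(x+η), v 0 * ω η (y - x)) = v 0 := by
      rw [intervalIntegral.integral_const_mul, intervalIntegral.integral_comp_sub_right (ω η) x]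
      simp only [sub_self, add_sub_cancel_left]
      rw [hωint η hη, mul_one]
    have hsub : (∫ y in x..(x+η), v (u' y) * ω η (y - x)) - v 0
        = ∫ y in x..(x+η), (v (u' y) - v 0) * ω η (y - x) := by
      conv_lhs => rw [← hconst]
      rw [← intervalIntegral.integral_sub hFint hGint]
      apply intervalIntegral.integral_congr
      intro y _
      ring
    set c : ℝ := min (max b x) (x + η) with hc
    have hxc : x ≤ c := le_min (le_max_right _ _) hxle
    have hcxη : c ≤ x + η := min_le_right _ _
    have hDint : IntervalIntegrable (fun y => (v (u' y) - v 0) * ω η (y - x)) volume x (x+η) := by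
      have h := hFint.sub hGint
      have he : (fun y => v (u' y) * ω η (y - x) - v 0 * ω η (y - x))
          = fun y => (v (u' y) - v 0) * ω η (y - x) := funext fun y => by ring
      rwa [he] at h
    have hD1 : IntervalIntegrable (fun y => (v (u' y) - v 0) * ω η (y - x)) volume x c := by
      apply hDint.mono_set
      rw [Set.uIcc_of_le hxc, Set.uIcc_of_le hxle]
      exact Set.Icc_subset_Icc (le_refl _) hcxη
    have hD2 : IntervalIntegrable (fun y => (v (u' y) - v 0) * ω η (y - x)) volume c (x+η) := by
      apply hDint.mono_set
      rw [Set.uIcc_of_le hcxη, Set.uIcc_of_le hxle]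
      exact Set.Icc_subset_Icc hxc (le_refl _)
    have hsplit : (∫ y in x..(x+η), (v (u' y) - v 0) * ω η (y - x))
        = (∫ y in x..c, (v (u' y) - v 0) * ω η (y - x))
          + ∫ y in c..(x+η), (v (u' y) - v 0) * ω η (y - x) :=
      (intervalIntegral.integral_add_adjacent_intervals hD1 hD2).symm
    have h2zero : (∫ y in c..(x+η), (v (u' y) - v 0) * ω η (y - x)) = 0 := by
      rw [intervalIntegral.integral_of_le hcxη]
      apply integral_eq_zero_of_ae
      filter_upwards [ae_restrict_mem measurableSet_Ioc] with y hy
      have hyb : b < y := by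
        rcases min_lt_iff.1 hy.1 with h | h
        · exact lt_of_le_of_lt (le_max_left b x) h
        · exact absurd hy.2 (not_le.2 h)
      have hy0 : 0 < y := lt_of_le_of_lt hb0 hyb
      have : u' y = 0 := by simp only [hu', if_pos hy0]; exact hb y hyb
      simp [this]
    have h1bd : ‖∫ y in x..c, (v (u' y) - v 0) * ω η (y - x)‖ ≤ v 0 * ω η 0 * (c - x) := by
      have := intervalIntegral.norm_integral_le_of_norm_le_const
        (C := v 0 * ω η 0) (f := fun y => (v (u' y) - v 0) * ω η (y - x))
        (a := x) (b := c) ?_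
      · rwa [abs_of_nonneg (by linarith : (0:ℝ) ≤ c - x)] at this
      · intro y hy
        rw [Set.uIoc_of_le hxc] at hy
        have hyx : (y - x) ∈ Set.Icc (0:ℝ) η := ⟨by linarith [hy.1], by linarith [hy.2, hcxη]⟩
        rw [norm_mul, Real.norm_eq_abs, Real.norm_eq_abs, abs_of_nonneg (hωnn' _ hyx)]
        have h1 : |v (u' y) - v 0| ≤ v 0 :=
          abs_le.2 ⟨by linarith [(hvu'bd y).1], by linarith [(hvu'bd y).2]⟩
        exact mul_le_mul h1 (hωle _ hyx) (hωnn' _ hyx) hv0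
    have hcC : c - x ≤ C := by
      have h1 : c ≤ max b x := min_le_left _ _
      have h2 : max b x ≤ x + C := max_le hbC (by linarith)
      linarith
    calc ‖(∫ y in x..(x+η), v (u y) * ω η (y - x)) - v 0‖
        = ‖∫ y in x..c, (v (u' y) - v 0) * ω η (y - x)‖ := by
          rw [hcong, hsub, hsplit, h2zero, add_zero]
      _ ≤ v 0 * ω η 0 * (c - x) := h1bd
      _ ≤ v 0 * ω η 0 * C := by
          apply mul_le_mul_of_nonneg_left hcC (mul_nonneg hv0 hω00)
  -- put it together
  rw [← tendsto_sub_nhds_zero_iff]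
  apply squeeze_zero_norm' ((eventually_gt_atTop 0).mono key)
  have : Tendsto (fun η => v 0 * ω η 0 * C) atTop (nhds (v 0 * 0 * C)) :=
    (hω0.const_mul (v 0)).mul_const C
  simpa using this
end

section
/- Pointwise limit of the outgoing nonlocal velocity in the transition area (on the incoming road) as the nonlocal range tends to infinity: let u : (0,∞) → [0,ρ_max] be measurable and either identically zero or having compact support contained in [0,∞). Then for every fixed x < 0, the quantity W_η(x) = ∫_0^{max(x+η,0)} v(u(y)) ω_η(y−x) dy satisfies lim_{η→∞} W_η(x) = v(0). -/
/-!
For `η > b - x`, where `[0, b]` contains the support of `u`, the integration range reaches past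
`b`, and there the integrand is `v 0 * ω_η (y - x)`, whose integral is `v 0` minus
`v 0 * ∫_0^{b-x} ω_η`. Since `ω_η` is nonincreasing, both that missing mass and the integral
over `[0, b]` are `O(ω_η 0)`, which tends to `0`.
-/

open MeasureTheory Filter

open Set intervalIntegral

section Kernel

variable {ω : ℝ → ℝ} {η : ℝ}

lemma abs_integral_sub_one_le_of_antitoneOn (hmono : AntitoneOn ω (Icc 0 η))
    (hnn : ∀ t ∈ Icc 0 η, 0 ≤ ω t) (hint : ∫ t in 0..η, ω t = 1) {a : ℝ}
    (ha : 0 ≤ a) (haη : a ≤ η) :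
    |(∫ t in a..η, ω t) - 1| ≤ a * ω 0 := by
  have h0a : IntervalIntegrable ω volume 0 a :=
    (hmono.mono (by rw [uIcc_of_le ha]; exact Icc_subset_Icc le_rfl haη)).intervalIntegrable
  have haη' : IntervalIntegrable ω volume a η :=
    (hmono.mono (by rw [uIcc_of_le haη]; exact Icc_subset_Icc ha le_rfl)).intervalIntegrable
  have hsplit : (∫ t in 0..a, ω t) + ∫ t in a..η, ω t = 1 := by
    rw [integral_add_adjacent_intervals h0a haη', hint]
  have hmass_nn : 0 ≤ ∫ t in 0..a, ω t :=
    integral_nonneg ha fun t ht => hnn t ⟨ht.1, ht.2.trans haη⟩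
  have hmass_le : ∫ t in 0..a, ω t ≤ a * ω 0 := by
    simpa using integral_mono_on ha h0a intervalIntegrable_const fun t ht =>
      hmono ⟨le_rfl, ha.trans haη⟩ ⟨ht.1, ht.2.trans haη⟩ ht.1
  rw [abs_le]
  constructor <;> linarith

variable {f : ℝ → ℝ} {x K : ℝ}

lemma intervalIntegrable_mul_comp_sub (hmono : AntitoneOn ω (Icc 0 η)) (hf : Measurable f)
    (hfK : ∀ y, |f y| ≤ K) (hx : x ≤ 0) (hxη : 0 ≤ x + η) :
    IntervalIntegrable (fun y => f y * ω (y - x)) volume 0 (x + η) := by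
  have hω : IntervalIntegrable ω volume (-x) η :=
    (hmono.mono (by rw [uIcc_of_le (by linarith)]; exact Icc_subset_Icc (by linarith) le_rfl)
      ).intervalIntegrable
  have hshift : IntervalIntegrable (fun y => ω (y - x)) volume 0 (x + η) := by
    simpa [add_comm] using hω.comp_sub_right x
  rw [intervalIntegrable_iff_integrableOn_Ioc_of_le hxη] at hshift ⊢
  exact hshift.bdd_mul hf.aestronglyMeasurable (ae_of_all _ fun y => hfK y)

lemma abs_integral_mul_comp_sub_le (hmono : AntitoneOn ω (Icc 0 η))
    (hnn : ∀ t ∈ Icc 0 η, 0 ≤ ω t) (hfK : ∀ y, |f y| ≤ K) (hx : x ≤ 0) {b : ℝ}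
    (hb : 0 ≤ b) (hbη : b - x ≤ η) :
    |∫ y in 0..b, f y * ω (y - x)| ≤ K * ω 0 * b := by
  have h := intervalIntegral.norm_integral_le_of_norm_le_const (a := 0) (b := b)
    (f := fun y => f y * ω (y - x)) (C := K * ω 0) fun y hy => ?_
  · rwa [Real.norm_eq_abs, sub_zero, abs_of_nonneg hb] at h
  rw [uIoc_of_le hb] at hy
  have hy' : y - x ∈ Icc 0 η := ⟨by linarith [hy.1], by linarith [hy.2]⟩
  rw [Real.norm_eq_abs, abs_mul, abs_of_nonneg (hnn _ hy')]
  exact mul_le_mul (hfK y) (hmono ⟨le_rfl, hy'.1.trans hy'.2⟩ hy' hy'.1) (hnn _ hy')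
    ((abs_nonneg _).trans (hfK 0))

lemma abs_integral_mul_comp_sub_sub_le (hmono : AntitoneOn ω (Icc 0 η))
    (hnn : ∀ t ∈ Icc 0 η, 0 ≤ ω t) (hint : ∫ t in 0..η, ω t = 1) (hf : Measurable f)
    (hfK : ∀ y, |f y| ≤ K) {b L : ℝ} (hfL : ∀ y, b < y → f y = L) (hx : x ≤ 0)
    (hb : 0 ≤ b) (hbη : b - x ≤ η) :
    |(∫ y in 0..x + η, f y * ω (y - x)) - L| ≤ (K * b + |L| * (b - x)) * ω 0 := by
  have hbc : b ≤ x + η := by linarith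
  have hb_mem : b ∈ uIcc 0 (x + η) := by rw [uIcc_of_le (hb.trans hbc)]; exact ⟨hb, hbc⟩
  have hF := intervalIntegrable_mul_comp_sub hmono hf hfK hx (hb.trans hbc)
  have hsplit := integral_add_adjacent_intervals (hF.mono_set (uIcc_subset_uIcc_left hb_mem))
    (hF.mono_set (uIcc_subset_uIcc_right hb_mem))
  have hfar : ∫ y in b..x + η, f y * ω (y - x) = L * ∫ t in (b - x)..η, ω t := by
    calc ∫ y in b..x + η, f y * ω (y - x) = ∫ y in b..x + η, L * ω (y - x) :=
          integral_congr_ae (ae_of_all _ fun y hy => by rw [hfL y (uIoc_of_le hbc ▸ hy).1])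
      _ = L * ∫ t in (b - x)..η, ω t := by
          rw [intervalIntegral.integral_const_mul, integral_comp_sub_right, add_sub_cancel_left]
  have hnear := abs_integral_mul_comp_sub_le hmono hnn hfK hx hb hbη
  have htail := abs_integral_sub_one_le_of_antitoneOn hmono hnn hint (a := b - x)
    (by linarith) hbη
  rw [← hsplit, hfar]
  calc |(∫ y in 0..b, f y * ω (y - x)) + L * (∫ t in (b - x)..η, ω t) - L|
      = |(∫ y in 0..b, f y * ω (y - x)) + L * ((∫ t in (b - x)..η, ω t) - 1)| := by
        rw [mul_sub, mul_one, add_sub_assoc]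
    _ ≤ |∫ y in 0..b, f y * ω (y - x)| + |L| * |(∫ t in (b - x)..η, ω t) - 1| := by
        rw [← abs_mul]
        exact abs_add_le _ _
    _ ≤ K * ω 0 * b + |L| * ((b - x) * ω 0) := by gcongr
    _ = (K * b + |L| * (b - x)) * ω 0 := by ring

end Kernel

theorem stmt_12_general
    (ρmax : ℝ) (hρmax : 0 < ρmax)
    (v : ℝ → ℝ)
    (hvmono : AntitoneOn v (Set.Icc 0 ρmax))
    (hvnn : ∀ x ∈ Set.Icc (0 : ℝ) ρmax, 0 ≤ v x)
    (ω : ℝ → ℝ → ℝ)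
    (hωmono : ∀ η : ℝ, 0 < η → AntitoneOn (ω η) (Set.Icc 0 η))
    (hωnn : ∀ η : ℝ, 0 < η → ∀ x ∈ Set.Icc (0 : ℝ) η, 0 ≤ ω η x)
    (hωint : ∀ η : ℝ, 0 < η → (∫ x in (0 : ℝ)..η, ω η x) = 1)
    (hω0 : Tendsto (fun η => ω η 0) atTop (nhds 0))
    (u : ℝ → ℝ) (hu_meas : Measurable u)
    (hu_range : ∀ y : ℝ, 0 < y → u y ∈ Set.Icc 0 ρmax)
    (hu_supp : (∀ y : ℝ, 0 < y → u y = 0) ∨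
      (∃ b : ℝ, 0 ≤ b ∧ ∀ y : ℝ, b < y → u y = 0))
    (x : ℝ) (hx : x < 0) :
    Tendsto (fun η : ℝ => ∫ y in (0 : ℝ)..max (x + η) 0, v (u y) * ω η (y - x))
      atTop (nhds (v 0)) := by
  obtain ⟨b, hb0, hb⟩ : ∃ b : ℝ, 0 ≤ b ∧ ∀ y : ℝ, b < y → u y = 0 :=
    hu_supp.elim (fun h => ⟨0, le_rfl, h⟩) id
  -- `v` extended constantly outside `[0, ρmax]`, so that `g ∘ u` is measurable
  set g : ℝ → ℝ := fun t => v (projIcc 0 ρmax hρmax.le t)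
  have hg_eq : ∀ t ∈ Icc 0 ρmax, g t = v t := fun t ht => by simp [g, projIcc_of_mem _ ht]
  have hg_anti : Antitone g := fun s t hst =>
    hvmono (Subtype.mem _) (Subtype.mem _) (monotone_projIcc _ hst)
  have hg_abs : ∀ t, |g t| ≤ v 0 := fun t => by
    rw [abs_of_nonneg (hvnn _ (Subtype.mem _))]
    exact hvmono ⟨le_rfl, hρmax.le⟩ (Subtype.mem _) (projIcc 0 ρmax hρmax.le t).2.1
  have hbound : ∀ᶠ η in atTop,
      ‖(∫ y in (0 : ℝ)..max (x + η) 0, v (u y) * ω η (y - x)) - v 0‖ ≤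
        (v 0 * b + |v 0| * (b - x)) * ω η 0 := by
    filter_upwards [eventually_ge_atTop (b - x)] with η hη
    have hη0 : 0 < η := by linarith
    have hc : 0 ≤ x + η := by linarith
    rw [max_eq_left hc, Real.norm_eq_abs, integral_congr_ae
      (g := fun y => g (u y) * ω η (y - x)) (ae_of_all _ fun y hy => by
        rw [uIoc_of_le hc] at hy
        rw [hg_eq _ (hu_range y hy.1)])]
    exact abs_integral_mul_comp_sub_sub_le (hωmono η hη0) (hωnn η hη0) (hωint η hη0)
      (hg_anti.measurable.comp hu_meas) (fun y => hg_abs _)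
      (fun y hy => by rw [Function.comp_apply, hb y hy, hg_eq 0 ⟨le_rfl, hρmax.le⟩])
      hx.le hb0 hη
  have := squeeze_zero_norm' hbound (by simpa using hω0.const_mul (v 0 * b + |v 0| * (b - x)))
  simpa using this.add_const (v 0)

/-- Pointwise limit of the outgoing nonlocal velocity in the transition
area (on the incoming road) as the nonlocal range tends to infinity: for
`u : (0,∞) → [0,ρmax]` measurable which is either identically zero or has compact
support contained in `[0,∞)`, and every fixed `x < 0`,
`W_η(x) = ∫_0^{max(x+η,0)} v(u(y)) ω_η(y-x) dy → v(0)` as `η → ∞`. -/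
theorem stmt_12
    (ρmax : ℝ) (hρmax : 0 < ρmax)
    (v : ℝ → ℝ)
    (hv : ContDiffOn ℝ 2 v (Set.Icc 0 ρmax))
    (hvmono : AntitoneOn v (Set.Icc 0 ρmax))
    (hvnn : ∀ x ∈ Set.Icc (0 : ℝ) ρmax, 0 ≤ v x)
    (hvmax : v ρmax = 0)
    (ω : ℝ → ℝ → ℝ)
    (hω : ∀ η : ℝ, 0 < η → ContDiffOn ℝ 1 (ω η) (Set.Icc 0 η))
    (hωmono : ∀ η : ℝ, 0 < η → AntitoneOn (ω η) (Set.Icc 0 η))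
    (hωnn : ∀ η : ℝ, 0 < η → ∀ x ∈ Set.Icc (0 : ℝ) η, 0 ≤ ω η x)
    (hωint : ∀ η : ℝ, 0 < η → (∫ x in (0 : ℝ)..η, ω η x) = 1)
    (hω0 : Tendsto (fun η => ω η 0) atTop (nhds 0))
    (u : ℝ → ℝ) (hu_meas : Measurable u)
    (hu_range : ∀ y : ℝ, 0 < y → u y ∈ Set.Icc 0 ρmax)
    (hu_supp : (∀ y : ℝ, 0 < y → u y = 0) ∨
      (∃ b : ℝ, 0 ≤ b ∧ ∀ y : ℝ, b < y → u y = 0))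
    (x : ℝ) (hx : x < 0) :
    Tendsto (fun η : ℝ => ∫ y in (0 : ℝ)..max (x + η) 0, v (u y) * ω η (y - x))
      atTop (nhds (v 0)) :=
  stmt_12_general ρmax hρmax v hvmono hvnn ω hωmono hωnn hωint hω0 u hu_meas hu_range hu_supp x hx
end

section
/- L¹-convergence on compact sets of the outgoing nonlocal velocity on the outgoing road: let u : (0,∞) × (0,∞) → [0,ρ_max] be measurable and either identically zero or having compact support in (0,∞) × (0,∞), and let K be a compact subset of (0,∞) × (0,∞). Define W_η(t,x) = ∫_x^{x+η} v(u(t,y)) ω_η(y−x) dy. Then lim_{η→∞} ∬_K |W_η(t,x) − v(0)| dx dt = 0. -/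
open MeasureTheory Filter

/-- L¹-convergence on compact sets of the outgoing nonlocal velocity on
the outgoing road: for `u : (0,∞) × (0,∞) → [0,ρmax]` measurable, either identically
zero or of compact support in `(0,∞) × (0,∞)`, and any compact `K ⊆ (0,∞) × (0,∞)`,
with `W_η(t,x) = ∫_x^{x+η} v(u(t,y)) ω_η(y-x) dy`, one has
`∬_K |W_η(t,x) - v(0)| dx dt → 0` as `η → ∞`. -/
theorem stmt_14
    (ρmax : ℝ) (hρmax : 0 < ρmax)
    (v : ℝ → ℝ)
    (hv : ContDiffOn ℝ 2 v (Set.Icc 0 ρmax))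
    (hvmono : AntitoneOn v (Set.Icc 0 ρmax))
    (hvnn : ∀ x ∈ Set.Icc (0 : ℝ) ρmax, 0 ≤ v x)
    (hvmax : v ρmax = 0)
    (ω : ℝ → ℝ → ℝ)
    (hω : ∀ η : ℝ, 0 < η → ContDiffOn ℝ 1 (ω η) (Set.Icc 0 η))
    (hωmono : ∀ η : ℝ, 0 < η → AntitoneOn (ω η) (Set.Icc 0 η))
    (hωnn : ∀ η : ℝ, 0 < η → ∀ x ∈ Set.Icc (0 : ℝ) η, 0 ≤ ω η x)
    (hωint : ∀ η : ℝ, 0 < η → (∫ x in (0 : ℝ)..η, ω η x) = 1)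
    (hω0 : Tendsto (fun η => ω η 0) atTop (nhds 0))
    (u : ℝ → ℝ → ℝ) (hu_meas : Measurable (Function.uncurry u))
    (hu_range : ∀ t x : ℝ, 0 < t → 0 < x → u t x ∈ Set.Icc 0 ρmax)
    (hu_supp : (∀ t x : ℝ, 0 < t → 0 < x → u t x = 0) ∨
      (∃ S : Set (ℝ × ℝ), IsCompact S ∧ S ⊆ Set.Ioi (0 : ℝ) ×ˢ Set.Ioi (0 : ℝ) ∧
        ∀ t x : ℝ, (t, x) ∉ S → u t x = 0))
    (K : Set (ℝ × ℝ)) (hK : IsCompact K)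
    (hKsub : K ⊆ Set.Ioi (0 : ℝ) ×ˢ Set.Ioi (0 : ℝ)) :
    Tendsto
      (fun η : ℝ =>
        ∫ p in K, |(∫ y in p.2..(p.2 + η), v (u p.1 y) * ω η (y - p.2)) - v 0|)
      atTop (nhds 0) := by
  -- Extract a bound `M` on the second coordinate of the support of `u` in the open quadrant.
  obtain ⟨M, hM0, hM⟩ : ∃ M : ℝ, 0 ≤ M ∧
      ∀ t y : ℝ, 0 < t → 0 < y → u t y ≠ 0 → y ≤ M := by
    rcases hu_supp with h0 | ⟨S, hSc, hSsub, hS0⟩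
    · exact ⟨0, le_rfl, fun t y ht hy hne => absurd (h0 t y ht hy) hne⟩
    · obtain ⟨R, hR⟩ := hSc.isBounded.subset_closedBall 0
      refine ⟨max R 0, le_max_right _ _, fun t y ht hy hne => ?_⟩
      have hmem : (t, y) ∈ S := by
        by_contra h; exact hne (hS0 t y h)
      have h1 : ‖((t, y) : ℝ × ℝ)‖ ≤ R := by
        simpa [Metric.mem_closedBall, dist_zero_right] using hR hmem
      calc y ≤ |y| := le_abs_self y
        _ ≤ ‖((t, y) : ℝ × ℝ)‖ := by simpa using norm_snd_le ((t, y) : ℝ × ℝ)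
        _ ≤ R := h1
        _ ≤ max R 0 := le_max_left _ _
  have hρ0 : (0 : ℝ) ∈ Set.Icc (0 : ℝ) ρmax := ⟨le_rfl, hρmax.le⟩
  have hv0nn : 0 ≤ v 0 := hvnn 0 hρ0
  -- clamped version of v
  set V : ℝ → ℝ := fun r => v (min ρmax (max 0 r)) with hVdef
  have hclamp : ∀ r : ℝ, min ρmax (max 0 r) ∈ Set.Icc (0 : ℝ) ρmax := fun r =>
    ⟨le_min hρmax.le (le_max_left _ _), min_le_left _ _⟩
  have hVc : Continuous V :=
    hv.continuousOn.comp_continuous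
      (continuous_const.min (continuous_const.max continuous_id)) hclamp
  have hVeq : ∀ r ∈ Set.Icc (0 : ℝ) ρmax, V r = v r := by
    intro r hr
    simp only [hVdef, max_eq_right hr.1, min_eq_right hr.2]
  have hV0 : V 0 = v 0 := hVeq 0 hρ0
  have hVnn : ∀ r, 0 ≤ V r := fun r => hvnn _ (hclamp r)
  have hVle : ∀ r, V r ≤ v 0 := fun r => hvmono hρ0 (hclamp r) (hclamp r).1
  -- squeeze
  have hKmeas : MeasurableSet K := hK.measurableSet
  apply squeeze_zero' (g := fun η => ((volume K).toReal * (v 0 * M)) * ω η 0)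
  · exact Eventually.of_forall fun η => integral_nonneg fun p => abs_nonneg _
  · filter_upwards [eventually_gt_atTop (0 : ℝ)] with η hη
    have hω0nn : 0 ≤ ω η 0 := hωnn η hη 0 ⟨le_rfl, hη.le⟩
    -- clamped version of ω η
    set Ω : ℝ → ℝ := fun z => ω η (min η (max 0 z)) with hΩdef
    have hclampη : ∀ z : ℝ, min η (max 0 z) ∈ Set.Icc (0 : ℝ) η := fun z =>
      ⟨le_min hη.le (le_max_left _ _), min_le_left _ _⟩
    have hΩc : Continuous Ω :=
      (hω η hη).continuousOn.comp_continuous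
        (continuous_const.min (continuous_const.max continuous_id)) hclampη
    have hΩeq : ∀ z ∈ Set.Icc (0 : ℝ) η, Ω z = ω η z := by
      intro z hz
      simp only [hΩdef, max_eq_right hz.1, min_eq_right hz.2]
    have hΩnn : ∀ z, 0 ≤ Ω z := fun z => hωnn η hη _ (hclampη z)
    have hΩle : ∀ z, Ω z ≤ ω η 0 :=
      fun z => hωmono η hη ⟨le_rfl, hη.le⟩ (hclampη z) (hclampη z).1
    -- pointwise bound on K
    have hpt : ∀ p ∈ K,
        |(∫ y in p.2..(p.2 + η), v (u p.1 y) * ω η (y - p.2)) - v 0| ≤ v 0 * M * ω η 0 := by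
      rintro ⟨t, x⟩ hp
      obtain ⟨ht, hx⟩ := hKsub hp
      simp only [Set.mem_Ioi] at ht hx
      have hle : x ≤ x + η := by linarith
      -- replace integrand by the clamped version
      have h1 : (∫ y in x..(x + η), v (u t y) * ω η (y - x))
          = ∫ y in x..(x + η), V (u t y) * Ω (y - x) := by
        apply intervalIntegral.integral_congr
        intro y hy
        rw [Set.uIcc_of_le hle] at hy
        have hy0 : 0 < y := lt_of_lt_of_le hx hy.1
        have hz : y - x ∈ Set.Icc (0 : ℝ) η := ⟨by linarith [hy.1], by linarith [hy.2]⟩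
        simp only [hVeq _ (hu_range t y ht hy0), hΩeq _ hz]
      -- integral of the weight is 1
      have hω1 : (∫ y in x..(x + η), Ω (y - x)) = 1 := by
        have h2 : (∫ y in x..(x + η), Ω (y - x)) = ∫ z in (x - x)..(x + η - x), Ω z :=
          intervalIntegral.integral_comp_sub_right Ω x
        rw [h2]
        have h3 : (∫ z in (x - x)..(x + η - x), Ω z) = ∫ z in (0:ℝ)..η, Ω z := by
          norm_num
        rw [h3]
        have h4 : (∫ z in (0:ℝ)..η, Ω z) = ∫ z in (0:ℝ)..η, ω η z := by
          apply intervalIntegral.integral_congr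
          intro z hz
          rw [Set.uIcc_of_le hη.le] at hz
          exact hΩeq z hz
        rw [h4, hωint η hη]
      -- measurability of t-section
      have hu_t : Measurable (u t) := hu_meas.comp measurable_prodMk_left
      have hmeas1 : Measurable fun y => V (u t y) * Ω (y - x) :=
        (hVc.measurable.comp hu_t).mul (hΩc.measurable.comp (measurable_id.sub measurable_const))
      have hInt1 : IntervalIntegrable (fun y => V (u t y) * Ω (y - x)) volume x (x + η) := by
        rw [intervalIntegrable_iff_integrableOn_Ioc_of_le hle]
        apply Measure.integrableOn_of_bounded (M := v 0 * ω η 0) measure_Ioc_lt_top.ne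
          hmeas1.aestronglyMeasurable
        apply ae_of_all
        intro y
        rw [Real.norm_eq_abs, abs_mul, abs_of_nonneg (hVnn _), abs_of_nonneg (hΩnn _)]
        exact mul_le_mul (hVle _) (hΩle _) (hΩnn _) hv0nn
      have hInt2 : IntervalIntegrable (fun y => V 0 * Ω (y - x)) volume x (x + η) :=
        (continuous_const.mul (hΩc.comp (continuous_id.sub continuous_const))).intervalIntegrable
          _ _
      have h2 : (∫ y in x..(x + η), V 0 * Ω (y - x)) = v 0 := by
        rw [intervalIntegral.integral_const_mul, hω1, mul_one, hV0]
      have h3 : (∫ y in x..(x + η), v (u t y) * ω η (y - x)) - v 0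
          = ∫ y in x..(x + η), (V (u t y) * Ω (y - x) - V 0 * Ω (y - x)) := by
        rw [h1, ← h2, ← intervalIntegral.integral_sub hInt1 hInt2]
      rw [h3]
      -- bound the integral
      have habs := intervalIntegral.abs_integral_le_integral_abs (μ := volume)
        (f := fun y => V (u t y) * Ω (y - x) - V 0 * Ω (y - x)) hle
      refine habs.trans ?_
      set G : ℝ → ℝ := fun y =>
        (v 0 * ω η 0) * Set.indicator (Set.Icc (0:ℝ) M) (fun _ => (1:ℝ)) y with hGdef
      have hIndInt : Integrable (Set.indicator (Set.Icc (0:ℝ) M) (fun _ => (1:ℝ))) volume :=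
        (integrable_indicator_iff measurableSet_Icc).2
          (integrableOn_const measure_Icc_lt_top.ne)
      have hGInt : IntervalIntegrable G volume x (x + η) :=
        (hIndInt.const_mul _).intervalIntegrable
      have hptb : ∀ y ∈ Set.Icc x (x + η),
          |V (u t y) * Ω (y - x) - V 0 * Ω (y - x)| ≤ G y := by
        intro y hy
        have hy0 : 0 < y := lt_of_lt_of_le hx hy.1
        by_cases hz : u t y = 0
        · simp only [hz, sub_self, abs_zero, hGdef]
          exact mul_nonneg (mul_nonneg hv0nn hω0nn)
            (Set.indicator_nonneg (fun _ _ => zero_le_one) y)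
        · have hyIcc : y ∈ Set.Icc (0:ℝ) M := ⟨hy0.le, hM t y ht hy0 hz⟩
          simp only [hGdef, Set.indicator_of_mem hyIcc, mul_one]
          rw [← sub_mul, abs_mul]
          apply mul_le_mul ?_ ?_ (abs_nonneg _) hv0nn
          · have := hVnn (u t y); have := hVle (u t y)
            rw [hV0, abs_le]; constructor <;> linarith
          · rw [abs_of_nonneg (hΩnn _)]; exact hΩle _
      have hAbsInt : IntervalIntegrable (fun y => |V (u t y) * Ω (y - x) - V 0 * Ω (y - x)|)
          volume x (x + η) := (hInt1.sub hInt2).abs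
      have hmono := intervalIntegral.integral_mono_on hle hAbsInt hGInt hptb
      refine hmono.trans ?_
      -- compute/bound the integral of G
      have hGval : (∫ y in x..(x + η), G y)
          = (v 0 * ω η 0) * ∫ y in x..(x + η),
              Set.indicator (Set.Icc (0:ℝ) M) (fun _ => (1:ℝ)) y := by
        simp only [hGdef]
        exact intervalIntegral.integral_const_mul _ _
      rw [hGval]
      have hIndBound : (∫ y in x..(x + η),
          Set.indicator (Set.Icc (0:ℝ) M) (fun _ => (1:ℝ)) y) ≤ M := by
        rw [intervalIntegral.integral_of_le hle]
        have h5 : (∫ y in Set.Ioc x (x + η),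
            Set.indicator (Set.Icc (0:ℝ) M) (fun _ => (1:ℝ)) y)
            ≤ ∫ y, Set.indicator (Set.Icc (0:ℝ) M) (fun _ => (1:ℝ)) y :=
          setIntegral_le_integral hIndInt
            (ae_of_all _ (Set.indicator_nonneg (fun _ _ => zero_le_one)))
        refine h5.trans ?_
        rw [integral_indicator measurableSet_Icc]
        simp [Real.volume_Icc, ENNReal.toReal_ofReal hM0, hM0]
      calc (v 0 * ω η 0) * ∫ y in x..(x + η),
            Set.indicator (Set.Icc (0:ℝ) M) (fun _ => (1:ℝ)) y
          ≤ (v 0 * ω η 0) * M :=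
            mul_le_mul_of_nonneg_left hIndBound (mul_nonneg hv0nn hω0nn)
        _ = v 0 * M * ω η 0 := by ring
    -- integrate the pointwise bound over K
    have hconstInt : IntegrableOn (fun _ : ℝ × ℝ => v 0 * M * ω η 0) K volume :=
      integrableOn_const hK.measure_lt_top.ne
    have hb := integral_mono_of_nonneg
      (f := fun p : ℝ × ℝ =>
        |(∫ y in p.2..(p.2 + η), v (u p.1 y) * ω η (y - p.2)) - v 0|)
      (g := fun _ : ℝ × ℝ => v 0 * M * ω η 0)
      (μ := volume.restrict K)
      (ae_of_all _ fun p => abs_nonneg _) hconstInt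
      ((ae_restrict_iff' hKmeas).2 (ae_of_all _ hpt))
    refine hb.trans ?_
    rw [setIntegral_const]
    rw [smul_eq_mul]
    ring_nf
    exact le_of_eq (by rw [measureReal_def]; ring)
  · have := hω0.const_mul ((volume K).toReal * (v 0 * M))
    simpa using this
end

section
/- L¹-convergence on compact subsets of the incoming domain of the outgoing nonlocal velocity: let u : (0,∞) × (0,∞) → [0,ρ_max] be measurable and either identically zero or having compact support in (0,∞) × (0,∞), and let K be a compact subset of (0,∞) × (−∞,0). Define W_η(t,x) = ∫_{max(x,0)}^{max(x+η,0)} v(u(t,y)) ω_η(y−x) dy. Then lim_{η→∞} ∬_K |W_η(t,x) − v(0)| dx dt = 0. -/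
open MeasureTheory Filter

/-- L¹-convergence on compact subsets of the incoming domain of the
outgoing nonlocal velocity: for `u : (0,∞) × (0,∞) → [0,ρmax]` measurable, either
identically zero or of compact support in `(0,∞) × (0,∞)`, and any compact
`K ⊆ (0,∞) × (-∞,0)`, with
`W_η(t,x) = ∫_{max(x,0)}^{max(x+η,0)} v(u(t,y)) ω_η(y-x) dy`, one has
`∬_K |W_η(t,x) - v(0)| dx dt → 0` as `η → ∞`. -/
theorem stmt_15
    (ρmax : ℝ) (hρmax : 0 < ρmax)
    (v : ℝ → ℝ)
    (hv : ContDiffOn ℝ 2 v (Set.Icc 0 ρmax))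
    (hvmono : AntitoneOn v (Set.Icc 0 ρmax))
    (hvnn : ∀ x ∈ Set.Icc (0 : ℝ) ρmax, 0 ≤ v x)
    (hvmax : v ρmax = 0)
    (ω : ℝ → ℝ → ℝ)
    (hω : ∀ η : ℝ, 0 < η → ContDiffOn ℝ 1 (ω η) (Set.Icc 0 η))
    (hωmono : ∀ η : ℝ, 0 < η → AntitoneOn (ω η) (Set.Icc 0 η))
    (hωnn : ∀ η : ℝ, 0 < η → ∀ x ∈ Set.Icc (0 : ℝ) η, 0 ≤ ω η x)
    (hωint : ∀ η : ℝ, 0 < η → (∫ x in (0 : ℝ)..η, ω η x) = 1)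
    (hω0 : Tendsto (fun η => ω η 0) atTop (nhds 0))
    (u : ℝ → ℝ → ℝ) (hu_meas : Measurable (Function.uncurry u))
    (hu_range : ∀ t x : ℝ, 0 < t → 0 < x → u t x ∈ Set.Icc 0 ρmax)
    (hu_supp : (∀ t x : ℝ, 0 < t → 0 < x → u t x = 0) ∨
      (∃ S : Set (ℝ × ℝ), IsCompact S ∧ S ⊆ Set.Ioi (0 : ℝ) ×ˢ Set.Ioi (0 : ℝ) ∧
        ∀ t x : ℝ, (t, x) ∉ S → u t x = 0))
    (K : Set (ℝ × ℝ)) (hK : IsCompact K)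
    (hKsub : K ⊆ Set.Ioi (0 : ℝ) ×ˢ Set.Iio (0 : ℝ)) :
    Tendsto
      (fun η : ℝ =>
        ∫ p in K,
          |(∫ y in (max p.2 0)..(max (p.2 + η) 0), v (u p.1 y) * ω η (y - p.2)) - v 0|)
      atTop (nhds 0) := by
  -- truncation map into [0, ρmax]
  have h0mem : (0:ℝ) ∈ Set.Icc (0:ℝ) ρmax := ⟨le_refl _, hρmax.le⟩
  set π : ℝ → ℝ := fun r => min (max r 0) ρmax with hπdef
  have hπmem : ∀ r, π r ∈ Set.Icc (0:ℝ) ρmax := fun r =>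
    ⟨le_min (le_max_right r 0) hρmax.le, min_le_right _ _⟩
  have hπeq : ∀ r ∈ Set.Icc (0:ℝ) ρmax, π r = r := fun r hr => by
    simp only [hπdef, max_eq_left hr.1, min_eq_left hr.2]
  have hπcont : Continuous π :=
    (continuous_id.max continuous_const).min continuous_const
  have hvπcont : Continuous (fun r => v (π r)) :=
    hv.continuousOn.comp_continuous hπcont hπmem
  have hv0 : 0 ≤ v 0 := hvnn 0 h0mem
  have hvπnn : ∀ r, 0 ≤ v (π r) := fun r => hvnn _ (hπmem r)
  have hvπle : ∀ r, v (π r) ≤ v 0 := fun r => hvmono h0mem (hπmem r) (hπmem r).1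
  have hvπ0 : v (π 0) = v 0 := by rw [hπeq 0 h0mem]
  -- a bound R for K
  obtain ⟨R₀, hR₀⟩ := hK.isBounded.subset_closedBall 0
  set R : ℝ := max R₀ 1 with hRdef
  have hR1 : (1:ℝ) ≤ R := le_max_right _ _
  have hRK : ∀ p ∈ K, -R ≤ p.2 := by
    intro p hp
    have h1 : ‖p‖ ≤ R₀ := by simpa [Metric.mem_closedBall] using hR₀ hp
    have h2 : |p.2| ≤ R₀ := (norm_snd_le p).trans h1
    have := (abs_le.mp h2).1
    have : -R₀ ≤ p.2 := this
    have : R₀ ≤ R := le_max_left _ _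
    linarith [(abs_le.mp h2).1]
  -- a bound b for the support of u
  obtain ⟨b, hb1, hbu⟩ : ∃ b : ℝ, 1 ≤ b ∧ ∀ t y : ℝ, 0 < t → b < y → u t y = 0 := by
    rcases hu_supp with h | ⟨S, hS, hSsub, hSu⟩
    · exact ⟨1, le_refl _, fun t y ht hy => h t y ht (lt_trans one_pos hy)⟩
    · obtain ⟨c, hc⟩ := hS.isBounded.subset_closedBall 0
      refine ⟨max c 1, le_max_right _ _, fun t y ht hy => ?_⟩
      apply hSu
      intro hmem
      have h1 : ‖(t, y)‖ ≤ c := by simpa [Metric.mem_closedBall] using hc hmem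
      have h2 : |y| ≤ c := (norm_snd_le (t, y)).trans h1
      have hy0 : 0 < y := lt_of_lt_of_le one_pos (le_trans (le_max_right c 1) hy.le)
      have : y ≤ c := (abs_le.mp h2).2
      have : c ≤ max c 1 := le_max_left _ _
      linarith [(abs_le.mp h2).2]
  have hb0 : (0:ℝ) ≤ b := le_trans zero_le_one hb1
  -- the key pointwise estimate
  have key : ∀ η : ℝ, R + b ≤ η → ∀ p ∈ K,
      |(∫ y in (max p.2 0)..(max (p.2 + η) 0), v (u p.1 y) * ω η (y - p.2)) - v 0|
        ≤ v 0 * (b + R) * ω η 0 := by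
    intro η hη p hp
    obtain ⟨t, x⟩ := p
    have ht : 0 < t := (hKsub hp).1
    have hx : x < 0 := (hKsub hp).2
    have hxR : -R ≤ x := hRK _ hp
    have hηpos : 0 < η := lt_of_lt_of_le (by linarith) hη
    have hbxη : b ≤ x + η := by linarith
    have hxη : 0 ≤ x + η := by linarith
    have hmax1 : max x 0 = 0 := max_eq_right hx.le
    have hmax2 : max (x + η) 0 = x + η := max_eq_left hxη
    have hωc : ContinuousOn (ω η) (Set.Icc 0 η) := (hω η hηpos).continuousOn
    have hω0nn : 0 ≤ ω η 0 := hωnn η hηpos 0 ⟨le_refl _, hηpos.le⟩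
    have hωb : ∀ z ∈ Set.Icc (0:ℝ) η, |ω η z| ≤ ω η 0 := fun z hz => by
      rw [abs_of_nonneg (hωnn η hηpos z hz)]
      exact hωmono η hηpos ⟨le_refl _, hηpos.le⟩ hz hz.1
    -- continuity of the shifted kernel
    have hωshift : ∀ c d : ℝ, x ≤ c → d ≤ x + η →
        ContinuousOn (fun y => ω η (y - x)) (Set.Icc c d) := by
      intro c d hc hd
      have hmap : ∀ y ∈ Set.Icc c d, (y - x) ∈ Set.Icc (0:ℝ) η := by
        intro y hy
        simp only [Set.mem_Icc] at hy ⊢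
        constructor
        · linarith [hy.1]
        · linarith [hy.2]
      exact hωc.comp ((continuous_sub_right x).continuousOn) hmap
    have Iω : ∀ c d : ℝ, x ≤ c → c ≤ d → d ≤ x + η →
        IntervalIntegrable (fun y => ω η (y - x)) volume c d := by
      intro c d h1 h2 h3
      have h := hωshift c d h1 h3
      rw [← Set.uIcc_of_le h2] at h
      exact h.intervalIntegrable
    have hut : Measurable fun y => u t y :=
      hu_meas.comp (measurable_const.prodMk measurable_id)
    have hfm : Measurable fun y => v (π (u t y)) := hvπcont.measurable.comp hut
    have Ig : ∀ c d : ℝ, x ≤ c → c ≤ d → d ≤ x + η →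
        IntervalIntegrable (fun y => v (π (u t y)) * ω η (y - x)) volume c d := by
      intro c d h1 h2 h3
      rw [intervalIntegrable_iff_integrableOn_Ioc_of_le h2]
      have hmono : volume.restrict (Set.Ioc c d) ≤ volume.restrict (Set.Icc c d) :=
        Measure.restrict_mono Set.Ioc_subset_Icc_self le_rfl
      refine Integrable.mono' (g := fun _ => v 0 * ω η 0)
        (integrableOn_const measure_Ioc_lt_top.ne) ?_ ?_
      · exact (hfm.aestronglyMeasurable).mul
          (((hωshift c d h1 h3).aestronglyMeasurable measurableSet_Icc).mono_measure hmono)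
      · refine (ae_restrict_iff' measurableSet_Ioc).2 (Eventually.of_forall fun y hy => ?_)
        have hyx : y - x ∈ Set.Icc (0:ℝ) η :=
          ⟨by linarith [hy.1], by linarith [hy.2]⟩
        rw [Real.norm_eq_abs, abs_mul]
        exact mul_le_mul (by rw [abs_of_nonneg (hvπnn _)]; exact hvπle _)
          (hωb _ hyx) (abs_nonneg _) hv0
    have Idiff : ∀ c d : ℝ, x ≤ c → c ≤ d → d ≤ x + η →
        IntervalIntegrable (fun y => (v (π (u t y)) - v 0) * ω η (y - x)) volume c d := by
      intro c d h1 h2 h3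
      have heq : (fun y => (v (π (u t y)) - v 0) * ω η (y - x))
          = fun y => v (π (u t y)) * ω η (y - x) - v 0 * ω η (y - x) := by
        funext y; ring
      rw [heq]
      exact (Ig c d h1 h2 h3).sub ((Iω c d h1 h2 h3).const_mul (v 0))
    -- replace u by its truncation
    have step2 : (∫ y in (0:ℝ)..(x+η), v (u t y) * ω η (y - x))
        = ∫ y in (0:ℝ)..(x+η), v (π (u t y)) * ω η (y - x) := by
      rw [intervalIntegral.integral_of_le hxη, intervalIntegral.integral_of_le hxη]
      refine setIntegral_congr_fun measurableSet_Ioc fun y hy => ?_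
      rw [hπeq _ (hu_range t y ht hy.1)]
    -- total mass 1
    have step3 : (∫ y in x..(x+η), ω η (y - x)) = 1 := by
      rw [intervalIntegral.integral_comp_sub_right (fun z => ω η z) x]
      simp only [sub_self, add_sub_cancel_left]
      exact hωint η hηpos
    have step4 : (∫ y in x..(x+η), ω η (y - x))
        = (∫ y in x..(0:ℝ), ω η (y - x)) + ∫ y in (0:ℝ)..(x+η), ω η (y - x) :=
      (intervalIntegral.integral_add_adjacent_intervals
        (Iω x 0 le_rfl hx.le hxη) (Iω 0 (x+η) hx.le hxη le_rfl)).symm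
    have step5 : (∫ y in (0:ℝ)..(x+η), (v (π (u t y)) - v 0) * ω η (y - x))
        = (∫ y in (0:ℝ)..(x+η), v (π (u t y)) * ω η (y - x))
          - v 0 * ∫ y in (0:ℝ)..(x+η), ω η (y - x) := by
      rw [← intervalIntegral.integral_const_mul,
        ← intervalIntegral.integral_sub (Ig 0 (x+η) hx.le hxη le_rfl)
          ((Iω 0 (x+η) hx.le hxη le_rfl).const_mul (v 0))]
      refine intervalIntegral.integral_congr fun y _ => ?_
      ring
    have htail : (∫ y in b..(x+η), (v (π (u t y)) - v 0) * ω η (y - x)) = 0 := by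
      rw [intervalIntegral.integral_of_le hbxη]
      refine setIntegral_eq_zero_of_forall_eq_zero fun y hy => ?_
      rw [hbu t y ht hy.1, hvπ0, sub_self, zero_mul]
    have step6 : (∫ y in (0:ℝ)..(x+η), (v (π (u t y)) - v 0) * ω η (y - x))
        = ∫ y in (0:ℝ)..b, (v (π (u t y)) - v 0) * ω η (y - x) := by
      rw [← intervalIntegral.integral_add_adjacent_intervals
        (Idiff 0 b hx.le hb0 hbxη) (Idiff b (x+η) (by linarith) hbxη le_rfl), htail, add_zero]
    -- bounds
    have bound1 : |∫ y in (0:ℝ)..b, (v (π (u t y)) - v 0) * ω η (y - x)|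
        ≤ v 0 * ω η 0 * b := by
      have h := intervalIntegral.norm_integral_le_of_norm_le_const
        (C := v 0 * ω η 0) (a := (0:ℝ)) (b := b)
        (f := fun y => (v (π (u t y)) - v 0) * ω η (y - x)) ?_
      · rw [Real.norm_eq_abs] at h
        calc |∫ y in (0:ℝ)..b, (v (π (u t y)) - v 0) * ω η (y - x)|
            ≤ v 0 * ω η 0 * |b - 0| := h
          _ = v 0 * ω η 0 * b := by rw [sub_zero, abs_of_nonneg hb0]
      · intro y hy
        rw [Set.uIoc_of_le hb0] at hy
        have hyx : y - x ∈ Set.Icc (0:ℝ) η :=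
          ⟨by linarith [hy.1], by linarith [hy.2]⟩
        rw [Real.norm_eq_abs, abs_mul]
        refine mul_le_mul ?_ (hωb _ hyx) (abs_nonneg _) hv0
        rw [abs_le]
        constructor
        · linarith [hvπnn (u t y)]
        · linarith [hvπle (u t y)]
    have bound2 : |∫ y in x..(0:ℝ), ω η (y - x)| ≤ ω η 0 * R := by
      have h := intervalIntegral.norm_integral_le_of_norm_le_const
        (C := ω η 0) (a := x) (b := (0:ℝ)) (f := fun y => ω η (y - x)) ?_
      · rw [Real.norm_eq_abs] at h
        calc |∫ y in x..(0:ℝ), ω η (y - x)| ≤ ω η 0 * |0 - x| := h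
          _ = ω η 0 * (-x) := by rw [zero_sub, abs_of_nonneg (by linarith : (0:ℝ) ≤ -x)]
          _ ≤ ω η 0 * R := by
              apply mul_le_mul_of_nonneg_left _ hω0nn
              linarith
      · intro y hy
        rw [Set.uIoc_of_le hx.le] at hy
        have hyx : y - x ∈ Set.Icc (0:ℝ) η :=
          ⟨by linarith [hy.1], by linarith [hy.2]⟩
        rw [Real.norm_eq_abs]
        exact hωb _ hyx
    -- assemble
    have hsum : (∫ y in (0:ℝ)..(x+η), v (π (u t y)) * ω η (y - x)) - v 0
        = (∫ y in (0:ℝ)..b, (v (π (u t y)) - v 0) * ω η (y - x))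
          - v 0 * ∫ y in x..(0:ℝ), ω η (y - x) := by
      have h14 : (∫ y in x..(0:ℝ), ω η (y - x))
          + (∫ y in (0:ℝ)..(x+η), ω η (y - x)) = 1 := by rw [← step4, step3]
      rw [← step6, step5]
      linear_combination (v 0) * h14
    simp only [hmax1, hmax2]
    rw [step2, hsum]
    calc |(∫ y in (0:ℝ)..b, (v (π (u t y)) - v 0) * ω η (y - x))
          - v 0 * ∫ y in x..(0:ℝ), ω η (y - x)|
        ≤ |∫ y in (0:ℝ)..b, (v (π (u t y)) - v 0) * ω η (y - x)|
          + |v 0 * ∫ y in x..(0:ℝ), ω η (y - x)| := abs_sub _ _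
      _ ≤ v 0 * ω η 0 * b + v 0 * (ω η 0 * R) := by
          rw [abs_mul, abs_of_nonneg hv0]
          exact add_le_add bound1 (mul_le_mul_of_nonneg_left bound2 hv0)
      _ = v 0 * (b + R) * ω η 0 := by ring
  -- conclude by squeezing
  have hKmeas : MeasurableSet K := hK.measurableSet
  have hKfin : volume K < ⊤ := hK.measure_lt_top
  apply squeeze_zero'
  · exact Eventually.of_forall fun η =>
      setIntegral_nonneg hKmeas fun p _ => abs_nonneg _
  · filter_upwards [eventually_ge_atTop (R + b)] with η hη
    have h := norm_setIntegral_le_of_norm_le_const_ae' (μ := volume)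
      (f := fun p : ℝ × ℝ =>
        |(∫ y in (max p.2 0)..(max (p.2 + η) 0), v (u p.1 y) * ω η (y - p.2)) - v 0|)
      (C := v 0 * (b + R) * ω η 0) hKfin
      (Eventually.of_forall fun p hp => by
        rw [Real.norm_eq_abs, abs_abs]; exact key η hη p hp)
    calc (∫ p in K,
          |(∫ y in (max p.2 0)..(max (p.2 + η) 0), v (u p.1 y) * ω η (y - p.2)) - v 0|)
        ≤ ‖∫ p in K,
          |(∫ y in (max p.2 0)..(max (p.2 + η) 0), v (u p.1 y) * ω η (y - p.2)) - v 0|‖ :=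
          le_abs_self _
      _ ≤ v 0 * (b + R) * ω η 0 * (volume K).toReal := h
  · have := (hω0.const_mul (v 0 * (b + R))).mul_const ((volume K).toReal)
    simpa using this
end

section
/- Spatial Lipschitz bound for the truncated nonlocal velocity: let u : ℝ → [0,ρ_max] be measurable and define V(x) = ∫_{min(x,0)}^{min(x+η,0)} v(u(y)) ω(y−x) dy for x ∈ ℝ. Then V is Lipschitz continuous with Lipschitz constant at most 4 ‖v‖ ω(0), where ‖v‖ = sup of v on [0,ρ_max]; in particular |V(x₁) − V(x₂)| ≤ 4 ‖v‖ ω(0) |x₁ − x₂| for all x₁, x₂ ∈ ℝ. -/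
open MeasureTheory

/-- Spatial Lipschitz bound for the truncated nonlocal velocity
`V(x) = ∫_{min(x,0)}^{min(x+η,0)} v(u(y)) ω(y-x) dy`: `V` is Lipschitz continuous with
constant at most `4 ‖v‖ ω(0)`, i.e. `|V(x₁) - V(x₂)| ≤ 4 ‖v‖ ω(0) |x₁ - x₂|` for all
`x₁, x₂ ∈ ℝ`, where `‖v‖` is the sup of `v` on `[0,ρmax]`. -/
theorem stmt_16
    (ρmax : ℝ) (hρmax : 0 < ρmax)
    (v : ℝ → ℝ)
    (hv : ContDiffOn ℝ 2 v (Set.Icc 0 ρmax))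
    (hvmono : AntitoneOn v (Set.Icc 0 ρmax))
    (hvnn : ∀ x ∈ Set.Icc (0 : ℝ) ρmax, 0 ≤ v x)
    (hvmax : v ρmax = 0)
    (η : ℝ) (hη : 0 < η)
    (ω : ℝ → ℝ)
    (hω : ContDiffOn ℝ 1 ω (Set.Icc 0 η))
    (hωmono : AntitoneOn ω (Set.Icc 0 η))
    (hωnn : ∀ x ∈ Set.Icc (0 : ℝ) η, 0 ≤ ω x)
    (hωint : (∫ x in (0 : ℝ)..η, ω x) = 1)
    (nv : ℝ) (hnv : nv = sSup (v '' Set.Icc 0 ρmax))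
    (u : ℝ → ℝ) (hu_meas : Measurable u)
    (hu_range : ∀ y : ℝ, u y ∈ Set.Icc 0 ρmax)
    (V : ℝ → ℝ)
    (hV : ∀ x : ℝ,
      V x = ∫ y in (min x 0)..(min (x + η) 0), v (u y) * ω (y - x)) :
    ∀ x₁ x₂ : ℝ, |V x₁ - V x₂| ≤ 4 * nv * ω 0 * |x₁ - x₂| := by
  -- clamped kernel
  set W : ℝ → ℝ := fun t => ω (max 0 (min t η)) with hWdef
  have hclamp_mem : ∀ t : ℝ, max 0 (min t η) ∈ Set.Icc (0:ℝ) η := fun t =>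
    ⟨le_max_left _ _, max_le hη.le (min_le_right _ _)⟩
  have hclamp_cont : Continuous fun t : ℝ => max 0 (min t η) :=
    continuous_const.max (continuous_id.min continuous_const)
  have hW_cont : Continuous W :=
    hω.continuousOn.comp_continuous hclamp_cont hclamp_mem
  have hW_anti : ∀ s t : ℝ, s ≤ t → W t ≤ W s := by
    intro s t hst
    exact hωmono (hclamp_mem s) (hclamp_mem t)
      (max_le_max le_rfl (min_le_min hst le_rfl))
  have hω0 : (0:ℝ) ∈ Set.Icc (0:ℝ) η := ⟨le_rfl, hη.le⟩
  have hW_nonneg : ∀ t : ℝ, 0 ≤ W t := fun t => hωnn _ (hclamp_mem t)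
  have hW_le : ∀ t : ℝ, W t ≤ ω 0 := fun t =>
    hωmono hω0 (hclamp_mem t) (le_max_left _ _)
  have hW_eq : ∀ t : ℝ, 0 ≤ t → t ≤ η → W t = ω t := by
    intro t h0 h1
    simp only [hWdef, min_eq_left h1, max_eq_right h0]
  -- the value function
  set f : ℝ → ℝ := fun y => v (u y) with hfdef
  have hnv0 : nv = v 0 := by
    have hne : (v '' Set.Icc 0 ρmax).Nonempty :=
      ⟨v 0, Set.mem_image_of_mem v ⟨le_rfl, hρmax.le⟩⟩
    have hub : ∀ z ∈ v '' Set.Icc 0 ρmax, z ≤ v 0 := by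
      rintro z ⟨t, ht, rfl⟩
      exact hvmono ⟨le_rfl, hρmax.le⟩ ht ht.1
    rw [hnv]
    exact le_antisymm (csSup_le hne hub)
      (le_csSup ⟨v 0, hub⟩ (Set.mem_image_of_mem v ⟨le_rfl, hρmax.le⟩))
  have hf_nonneg : ∀ y : ℝ, 0 ≤ f y := fun y => hvnn _ (hu_range y)
  have hf_le : ∀ y : ℝ, f y ≤ nv := by
    intro y
    rw [hnv0]
    exact hvmono ⟨le_rfl, hρmax.le⟩ (hu_range y) (hu_range y).1
  have hnv_nonneg : 0 ≤ nv := le_trans (hf_nonneg 0) (hf_le 0)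
  have hω0_nonneg : 0 ≤ ω 0 := hωnn 0 hω0
  have hf_meas : Measurable f := by
    have hvc : Continuous fun t : ℝ => v (max 0 (min t ρmax)) :=
      hv.continuousOn.comp_continuous
        (continuous_const.max (continuous_id.min continuous_const))
        (fun t => ⟨le_max_left _ _, max_le hρmax.le (min_le_right _ _)⟩)
    have : f = fun y => v (max 0 (min (u y) ρmax)) := by
      funext y
      rw [hfdef]
      simp only [min_eq_left (hu_range y).2, max_eq_right (hu_range y).1]
    rw [this]
    exact hvc.measurable.comp hu_meas
  -- rewrite V using W
  have hV' : ∀ x : ℝ, V x = ∫ y in (min x 0)..(min (x + η) 0), f y * W (y - x) := by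
    intro x
    rw [hV]
    rcases le_or_gt x 0 with hx | hx
    · apply intervalIntegral.integral_congr
      intro y hy
      have hab : min x 0 ≤ min (x + η) 0 := min_le_min (by linarith) le_rfl
      rw [Set.uIcc_of_le hab] at hy
      have h1 : min x 0 = x := min_eq_left hx
      have hy1 : x ≤ y := h1 ▸ hy.1
      have hy2 : y ≤ x + η := le_trans hy.2 (min_le_left _ _)
      show v (u y) * ω (y - x) = f y * W (y - x)
      rw [hW_eq (y - x) (by linarith) (by linarith)]
    · have h1 : min x 0 = 0 := min_eq_right hx.le
      have h2 : min (x + η) 0 = 0 := min_eq_right (by linarith)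
      rw [h1, h2, intervalIntegral.integral_same, intervalIntegral.integral_same]
  -- integrability
  have hInt : ∀ c a b : ℝ, IntervalIntegrable (fun y => f y * W (y - c)) volume a b := by
    intro c a b
    have hm : Measurable fun y : ℝ => f y * W (y - c) :=
      hf_meas.mul (hW_cont.measurable.comp (measurable_id.sub_const c))
    rw [intervalIntegrable_iff]
    apply Integrable.mono' (g := fun _ => nv * ω 0)
    · exact integrableOn_const measure_Ioc_lt_top.ne
    · exact hm.aestronglyMeasurable
    · filter_upwards with y
      rw [Real.norm_eq_abs, abs_mul, abs_of_nonneg (hf_nonneg y),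
        abs_of_nonneg (hW_nonneg _)]
      exact mul_le_mul (hf_le y) (hW_le _) (hW_nonneg _) hnv_nonneg
  have hIntW : ∀ a b : ℝ, IntervalIntegrable W volume a b := fun a b =>
    hW_cont.intervalIntegrable a b
  -- key estimate for ordered points
  have key : ∀ x₂ x₁ : ℝ, x₂ ≤ x₁ → |V x₁ - V x₂| ≤ 4 * nv * ω 0 * (x₁ - x₂) := by
    intro x₂ x₁ hle
    set Δ : ℝ := x₁ - x₂ with hΔdef
    have hΔ : 0 ≤ Δ := by linarith
    set a₁ : ℝ := min x₁ 0 with ha₁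
    set b₁ : ℝ := min (x₁ + η) 0 with hb₁
    set a₂ : ℝ := min x₂ 0 with ha₂
    set b₂ : ℝ := min (x₂ + η) 0 with hb₂
    have hab₁ : a₁ ≤ b₁ := min_le_min (by linarith) le_rfl
    have hab₂ : a₂ ≤ b₂ := min_le_min (by linarith) le_rfl
    have haa : a₂ ≤ a₁ := min_le_min hle le_rfl
    have hbb : b₂ ≤ b₁ := min_le_min (by linarith) le_rfl
    have haaΔ : a₁ - a₂ ≤ Δ := by
      rw [ha₁, ha₂, hΔdef]
      rcases min_cases x₁ (0:ℝ) with ⟨e₁, he₁⟩ | ⟨e₁, he₁⟩ <;>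
        rcases min_cases x₂ (0:ℝ) with ⟨e₂, he₂⟩ | ⟨e₂, he₂⟩ <;>
        rw [e₁, e₂] <;> linarith
    have hbbΔ : b₁ - b₂ ≤ Δ := by
      rw [hb₁, hb₂, hΔdef]
      rcases min_cases (x₁ + η) (0:ℝ) with ⟨e₁, he₁⟩ | ⟨e₁, he₁⟩ <;>
        rcases min_cases (x₂ + η) (0:ℝ) with ⟨e₂, he₂⟩ | ⟨e₂, he₂⟩ <;>
        rw [e₁, e₂] <;> linarith
    -- the three pieces
    have hd_nonneg : ∀ y : ℝ, 0 ≤ W (y - x₁) - W (y - x₂) := by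
      intro y
      have := hW_anti (y - x₁) (y - x₂) (by linarith)
      linarith
    have hWc1 : Continuous fun y : ℝ => W (y - x₁) :=
      hW_cont.comp (continuous_id.sub continuous_const)
    have hWc2 : Continuous fun y : ℝ => W (y - x₂) :=
      hW_cont.comp (continuous_id.sub continuous_const)
    have hIntd : ∀ p q : ℝ,
        IntervalIntegrable (fun y => W (y - x₁) - W (y - x₂)) volume p q := fun p q =>
      (hWc1.sub hWc2).intervalIntegrable p q
    have hInth : ∀ p q : ℝ,
        IntervalIntegrable (fun y => f y * (W (y - x₁) - W (y - x₂))) volume p q := by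
      intro p q
      have hm : Measurable fun y : ℝ => f y * (W (y - x₁) - W (y - x₂)) :=
        hf_meas.mul (hWc1.sub hWc2).measurable
      rw [intervalIntegrable_iff]
      apply Integrable.mono' (g := fun _ => nv * (2 * ω 0))
        (integrableOn_const measure_Ioc_lt_top.ne) hm.aestronglyMeasurable
      filter_upwards with y
      rw [Real.norm_eq_abs, abs_mul]
      have h1 : |f y| ≤ nv := by
        rw [abs_of_nonneg (hf_nonneg y)]; exact hf_le y
      have h2 : |W (y - x₁) - W (y - x₂)| ≤ 2 * ω 0 := by
        have l1 := hW_nonneg (y - x₁); have l2 := hW_nonneg (y - x₂)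
        have l3 := hW_le (y - x₁); have l4 := hW_le (y - x₂)
        rw [abs_le]; constructor <;> linarith
      exact mul_le_mul h1 h2 (abs_nonneg _) hnv_nonneg
    set g : ℝ → ℝ := fun y => f y * W (y - x₂) with hgdef
    set T1 : ℝ := ∫ y in a₁..b₁, f y * (W (y - x₁) - W (y - x₂)) with hT1
    set T2 : ℝ := ∫ y in a₂..a₁, g y with hT2
    set T3 : ℝ := ∫ y in b₂..b₁, g y with hT3
    -- decomposition
    have hdecomp : V x₁ - V x₂ = T1 - T2 + T3 := by
      have e0 : (∫ y in a₁..b₁, f y * W (y - x₁))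
          = ∫ y in a₁..b₁, (f y * (W (y - x₁) - W (y - x₂)) + g y) := by
        apply intervalIntegral.integral_congr
        intro y _
        show f y * W (y - x₁) = f y * (W (y - x₁) - W (y - x₂)) + f y * W (y - x₂)
        ring
      have e1 : (∫ y in a₁..b₁, f y * W (y - x₁)) = T1 + ∫ y in a₁..b₁, g y := by
        rw [e0, intervalIntegral.integral_add (hInth a₁ b₁) (hInt x₂ a₁ b₁)]
      have e2 : T2 + (∫ y in a₁..b₁, g y) = ∫ y in a₂..b₁, g y :=
        intervalIntegral.integral_add_adjacent_intervals (hInt x₂ a₂ a₁) (hInt x₂ a₁ b₁)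
      have e3 : (∫ y in a₂..b₂, g y) + T3 = ∫ y in a₂..b₁, g y :=
        intervalIntegral.integral_add_adjacent_intervals (hInt x₂ a₂ b₂) (hInt x₂ b₂ b₁)
      rw [hV' x₁, hV' x₂]
      linarith [e1, e2, e3]
    -- bound on T2, T3
    have hC : 0 ≤ nv * ω 0 := mul_nonneg hnv_nonneg hω0_nonneg
    have hbound : ∀ p q : ℝ, |q - p| ≤ Δ → |∫ y in p..q, g y| ≤ nv * ω 0 * Δ := by
      intro p q hpq
      have := intervalIntegral.norm_integral_le_of_norm_le_const
        (f := g) (C := nv * ω 0) (a := p) (b := q) ?_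
      · rw [Real.norm_eq_abs] at this
        exact le_trans this (mul_le_mul_of_nonneg_left hpq hC)
      · intro y _
        show ‖f y * W (y - x₂)‖ ≤ nv * ω 0
        rw [Real.norm_eq_abs, abs_mul, abs_of_nonneg (hf_nonneg y),
          abs_of_nonneg (hW_nonneg _)]
        exact mul_le_mul (hf_le y) (hW_le _) (hW_nonneg _) hnv_nonneg
    have hT2b : |T2| ≤ nv * ω 0 * Δ :=
      hbound a₂ a₁ (by rw [abs_of_nonneg (by linarith)]; linarith)
    have hT3b : |T3| ≤ nv * ω 0 * Δ :=
      hbound b₂ b₁ (by rw [abs_of_nonneg (by linarith)]; linarith)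
    -- bound on T1
    have hT1b : |T1| ≤ nv * ω 0 * Δ := by
      have hT1nonneg : 0 ≤ T1 := by
        rw [hT1]
        apply intervalIntegral.integral_nonneg hab₁
        intro y _
        exact mul_nonneg (hf_nonneg y) (hd_nonneg y)
      have step1 : T1 ≤ ∫ y in a₁..b₁, nv * (W (y - x₁) - W (y - x₂)) := by
        rw [hT1]
        apply intervalIntegral.integral_mono_on hab₁ (hInth a₁ b₁)
          ((hIntd a₁ b₁).const_mul nv)
        intro y _
        exact mul_le_mul_of_nonneg_right (hf_le y) (hd_nonneg y)
      have step2 : (∫ y in a₁..b₁, nv * (W (y - x₁) - W (y - x₂)))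
          = nv * ((∫ t in (a₁ - x₁)..(b₁ - x₁), W t) - ∫ t in (a₁ - x₂)..(b₁ - x₂), W t) := by
        rw [intervalIntegral.integral_const_mul]
        congr 1
        rw [intervalIntegral.integral_sub (hWc1.intervalIntegrable a₁ b₁)
          (hWc2.intervalIntegrable a₁ b₁),
          intervalIntegral.integral_comp_sub_right W x₁,
          intervalIntegral.integral_comp_sub_right W x₂]
      have chasles : (∫ t in (a₁ - x₁)..(b₁ - x₁), W t) - (∫ t in (a₁ - x₂)..(b₁ - x₂), W t)
          = (∫ t in (a₁ - x₁)..(a₁ - x₂), W t) - ∫ t in (b₁ - x₁)..(b₁ - x₂), W t := by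
        have c1 : (∫ t in (a₁ - x₁)..(a₁ - x₂), W t) + (∫ t in (a₁ - x₂)..(b₁ - x₂), W t)
            = ∫ t in (a₁ - x₁)..(b₁ - x₂), W t :=
          intervalIntegral.integral_add_adjacent_intervals (hIntW _ _) (hIntW _ _)
        have c2 : (∫ t in (a₁ - x₁)..(b₁ - x₁), W t) + (∫ t in (b₁ - x₁)..(b₁ - x₂), W t)
            = ∫ t in (a₁ - x₁)..(b₁ - x₂), W t :=
          intervalIntegral.integral_add_adjacent_intervals (hIntW _ _) (hIntW _ _)
        linarith
      have hup : (∫ t in (a₁ - x₁)..(a₁ - x₂), W t) ≤ ω 0 * Δ := by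
        have h1 : a₁ - x₁ ≤ a₁ - x₂ := by linarith
        calc (∫ t in (a₁ - x₁)..(a₁ - x₂), W t)
            ≤ ∫ _ in (a₁ - x₁)..(a₁ - x₂), ω 0 := by
              apply intervalIntegral.integral_mono_on h1 (hIntW _ _)
                intervalIntegrable_const
              intro t _
              exact hW_le t
          _ = ω 0 * Δ := by
              rw [intervalIntegral.integral_const, smul_eq_mul]
              rw [hΔdef]; ring
      have hlo : 0 ≤ ∫ t in (b₁ - x₁)..(b₁ - x₂), W t := by
        apply intervalIntegral.integral_nonneg (by linarith)
        intro t _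
        exact hW_nonneg t
      have hfin : T1 ≤ nv * ω 0 * Δ := by
        have : (∫ y in a₁..b₁, nv * (W (y - x₁) - W (y - x₂))) ≤ nv * (ω 0 * Δ) := by
          rw [step2, chasles]
          apply mul_le_mul_of_nonneg_left _ hnv_nonneg
          linarith
        calc T1 ≤ _ := step1
          _ ≤ nv * (ω 0 * Δ) := this
          _ = nv * ω 0 * Δ := by ring
      rw [abs_of_nonneg hT1nonneg]
      exact hfin
    have habs : |T1 - T2 + T3| ≤ |T1| + |T2| + |T3| := by
      have h1 : |T1 - T2 + T3| ≤ |T1 - T2| + |T3| := abs_add_le _ _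
      have h2 : |T1 - T2| ≤ |T1| + |T2| := by
        rw [sub_eq_add_neg]
        exact le_trans (abs_add_le _ _) (by rw [abs_neg])
      linarith
    calc |V x₁ - V x₂| = |T1 - T2 + T3| := by rw [hdecomp]
      _ ≤ |T1| + |T2| + |T3| := habs
      _ ≤ 3 * (nv * ω 0 * Δ) := by linarith
      _ ≤ 4 * nv * ω 0 * Δ := by nlinarith [mul_nonneg hC hΔ]
  intro x₁ x₂
  rcases le_total x₂ x₁ with h | h
  · rw [abs_of_nonneg (by linarith : (0:ℝ) ≤ x₁ - x₂)]
    exact key x₂ x₁ h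
  · rw [abs_sub_comm (x₁) (x₂), abs_of_nonneg (by linarith : (0:ℝ) ≤ x₂ - x₁),
      abs_sub_comm (V x₁) (V x₂)]
    exact key x₁ x₂ h
end

section
/- Riemann problem for the limit model, subcritical case: let 0 ≤ ρ_L ≤ ρ_max and 0 ≤ ρ_R ≤ ρ_max, and define ρ₀(x) = ρ_L for x < 0 and ρ₀(x) = ρ_R for x > 0. Then the translated profile ρ(t,x) = ρ₀(x − v·t) is an entropy weak solution of ∂_t ρ + ∂_x f(ρ) = 0 with f(s) = v · min(s, ρ_max) and initial datum ρ₀; that is, for every κ ∈ ℝ and every nonnegative φ ∈ C¹_c([0,∞) × ℝ): 0 ≤ ∫₀^∞ ∫_ℝ ( |ρ − κ| ∂_t φ + sgn(ρ − κ)( f(ρ) − f(κ) ) ∂_x φ ) dx dt + ∫_ℝ |ρ₀(x) − κ| φ(0,x) dx. -/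
open MeasureTheory Filter

private lemma stmt18_comp_cs {H : ℝ × ℝ → ℝ} (hs : HasCompactSupport H) {g : ℝ → ℝ × ℝ}
    (hg : ∀ t, ‖t‖ ≤ ‖g t‖) : HasCompactSupport fun t => H (g t) := by
  obtain ⟨R, hR⟩ := hs.isBounded.subset_closedBall 0
  apply HasCompactSupport.intro (isCompact_Icc (a := -R) (b := R))
  intro t ht
  by_contra h
  have hmem := hR (subset_tsupport H h)
  rw [Metric.mem_closedBall, dist_zero_right] at hmem
  have h2 : ‖t‖ ≤ R := (hg t).trans hmem
  rw [Real.norm_eq_abs, abs_le] at h2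
  exact ht ⟨h2.1, h2.2⟩

private lemma stmt18_sign_mul_self (x : ℝ) : Real.sign x * x = |x| := by
  rcases lt_trichotomy x 0 with h | h | h
  · rw [Real.sign_of_neg h, abs_of_neg h]; ring
  · simp [h]
  · rw [Real.sign_of_pos h, abs_of_pos h]; ring

private noncomputable def stmt18_ind : ℝ → ℝ := fun y => if y < 0 then 1 else 0

private lemma stmt18_ind_of_neg {y : ℝ} (h : y < 0) : stmt18_ind y = 1 := if_pos h

private lemma stmt18_ind_of_nonneg {y : ℝ} (h : ¬ y < 0) : stmt18_ind y = 0 := if_neg h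

private lemma stmt18_ind_meas : Measurable stmt18_ind :=
  measurable_const.ite measurableSet_Iio measurable_const

private lemma stmt18_ind_bdd (y : ℝ) : ‖stmt18_ind y‖ ≤ 1 := by
  unfold stmt18_ind; split <;> simp


/-- Riemann problem for the limit model, subcritical case: for
`0 ≤ ρ_L ≤ ρ_max`, `0 ≤ ρ_R ≤ ρ_max` and Riemann datum `ρ₀`, the translated profile
`ρ(t,x) = ρ₀(x - v t)` is an entropy weak solution of `∂_t ρ + ∂_x f(ρ) = 0` with
`f(s) = v min(s, ρ_max)`. -/
theorem stmt_18
    (v ρmax : ℝ) (hv : 0 < v) (hρmax : 0 < ρmax)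
    (ρL ρR : ℝ) (hρL : ρL ∈ Set.Icc 0 ρmax) (hρR : ρR ∈ Set.Icc 0 ρmax)
    (f : ℝ → ℝ) (hf : ∀ s : ℝ, f s = v * min s ρmax)
    (ρ₀ : ℝ → ℝ) (hρ₀ : ∀ x : ℝ, ρ₀ x = if x < 0 then ρL else ρR)
    (ρ : ℝ → ℝ → ℝ) (hρ : ∀ t x : ℝ, ρ t x = ρ₀ (x - v * t)) :
    ∀ κ : ℝ, ∀ φ : ℝ → ℝ → ℝ,
      ContDiff ℝ 1 (Function.uncurry φ) → HasCompactSupport (Function.uncurry φ) →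
      (∀ t x : ℝ, 0 ≤ φ t x) →
      0 ≤ (∫ t in Set.Ioi (0 : ℝ), ∫ x : ℝ,
            (|ρ t x - κ| * deriv (fun s => φ s x) t
              + Real.sign (ρ t x - κ) * (f (ρ t x) - f κ)
                * deriv (fun y => φ t y) x))
          + ∫ x : ℝ, |ρ₀ x - κ| * φ 0 x := by
  intro κ φ hφ hsupp hpos
  have hFc : Continuous (Function.uncurry φ) := hφ.continuous
  -- slice regularity
  have cdt : ∀ x : ℝ, ContDiff ℝ 1 fun s => φ s x :=
    fun x => hφ.comp (contDiff_id.prodMk contDiff_const)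
  have cdx : ∀ t : ℝ, ContDiff ℝ 1 fun y => φ t y :=
    fun t => hφ.comp (contDiff_const.prodMk contDiff_id)
  have cst : ∀ x : ℝ, HasCompactSupport fun s => φ s x := fun x =>
    stmt18_comp_cs hsupp (g := fun s => (s, x)) (fun s => by
      rw [Prod.norm_def]; exact le_max_left _ _)
  have csx : ∀ t : ℝ, HasCompactSupport fun y => φ t y := fun t =>
    stmt18_comp_cs hsupp (g := fun y => (t, y)) (fun y => by
      rw [Prod.norm_def]; exact le_max_right _ _)
  -- FTC facts
  have FTCt : ∀ a x : ℝ, (∫ t in Set.Ioi a, deriv (fun s => φ s x) t) = -φ a x :=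
    fun a x => HasCompactSupport.integral_Ioi_deriv_eq (cdt x) (cst x) a
  have FTCxIio : ∀ t b : ℝ, (∫ x in Set.Iio b, deriv (fun y => φ t y) x) = φ t b := by
    intro t b
    rw [← integral_Iic_eq_integral_Iio]
    exact HasCompactSupport.integral_Iic_deriv_eq (cdx t) (csx t) b
  have iDx : ∀ t : ℝ, Integrable (fun x => deriv (fun y => φ t y) x) volume := fun t =>
    ((cdx t).continuous_deriv le_rfl).integrable_of_hasCompactSupport ((csx t).deriv)
  have FTCx0 : ∀ t : ℝ, (∫ x, deriv (fun y => φ t y) x) = 0 := by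
    intro t
    have h1 := HasCompactSupport.integral_Iic_deriv_eq (cdx t) (csx t) 0
    have h2 := HasCompactSupport.integral_Ioi_deriv_eq (cdx t) (csx t) 0
    rw [← intervalIntegral.integral_Iic_add_Ioi (iDx t).integrableOn (iDx t).integrableOn, h1, h2]; ring
  -- partial derivative in t as fderiv, and product integrability
  have hDt_eq : ∀ t x : ℝ, deriv (fun s => φ s x) t = fderiv ℝ (Function.uncurry φ) (t, x) (1, 0) := by
    intro t x
    have h1 : HasFDerivAt (Function.uncurry φ) (fderiv ℝ (Function.uncurry φ) (t, x)) (t, x) :=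
      (hφ.differentiable one_ne_zero (t, x)).hasFDerivAt
    have h2 : HasDerivAt (fun s : ℝ => (s, x)) ((1 : ℝ), (0 : ℝ)) t :=
      (hasDerivAt_id t).prodMk (hasDerivAt_const t x)
    exact (h1.comp_hasDerivAt t h2).deriv
  have contDt : Continuous fun p : ℝ × ℝ => fderiv ℝ (Function.uncurry φ) p (1, 0) :=
    (hφ.continuous_fderiv one_ne_zero).clm_apply continuous_const
  have cptDt : HasCompactSupport fun p : ℝ × ℝ => fderiv ℝ (Function.uncurry φ) p (1, 0) :=
    hsupp.fderiv_apply ℝ ((1:ℝ), (0:ℝ))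
  have intDt : Integrable (fun p : ℝ × ℝ => deriv (fun s => φ s p.2) p.1)
      ((volume.restrict (Set.Ioi 0)).prod volume) := by
    have h1 : Integrable (fun p : ℝ × ℝ => fderiv ℝ (Function.uncurry φ) p (1, 0)) volume :=
      contDt.integrable_of_hasCompactSupport cptDt
    rw [MeasureTheory.Measure.volume_eq_prod] at h1
    have h2 : Integrable (fun p : ℝ × ℝ => fderiv ℝ (Function.uncurry φ) p (1, 0))
        ((volume.restrict (Set.Ioi 0)).prod volume) := by
      rw [Measure.restrict_prod_eq_prod_univ]; exact h1.restrict
    exact h2.congr (Filter.Eventually.of_forall fun p => (hDt_eq p.1 p.2).symm)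
  have intIndDt : Integrable
      (fun p : ℝ × ℝ => stmt18_ind (p.2 - v * p.1) * deriv (fun s => φ s p.2) p.1)
      ((volume.restrict (Set.Ioi 0)).prod volume) :=
    intDt.bdd_mul
      ((stmt18_ind_meas.comp (measurable_snd.sub (measurable_fst.const_mul v))).aestronglyMeasurable)
      (Filter.Eventually.of_forall fun p => stmt18_ind_bdd _)
  -- fixed-t integrability in x
  have iDt : ∀ t : ℝ, Integrable (fun x => deriv (fun s => φ s x) t) volume := by
    intro t
    have h1 : Integrable (fun x : ℝ => fderiv ℝ (Function.uncurry φ) (t, x) (1, 0)) volume :=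
      (contDt.comp (continuous_const.prodMk continuous_id)).integrable_of_hasCompactSupport
        (stmt18_comp_cs cptDt (g := fun x => (t, x)) (fun x => by
          rw [Prod.norm_def]; exact le_max_right _ _))
    exact h1.congr (Filter.Eventually.of_forall fun x => (hDt_eq t x).symm)
  have iIndDt : ∀ t : ℝ,
      Integrable (fun x => stmt18_ind (x - v * t) * deriv (fun s => φ s x) t) volume := fun t =>
    (iDt t).bdd_mul ((stmt18_ind_meas.comp (measurable_id.sub measurable_const)).aestronglyMeasurable)
      (Filter.Eventually.of_forall fun x => stmt18_ind_bdd _)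
  have iIndDx : ∀ t : ℝ,
      Integrable (fun x => stmt18_ind (x - v * t) * deriv (fun y => φ t y) x) volume := fun t =>
    (iDx t).bdd_mul ((stmt18_ind_meas.comp (measurable_id.sub measurable_const)).aestronglyMeasurable)
      (Filter.Eventually.of_forall fun x => stmt18_ind_bdd _)
  -- ψ t = φ t (v t)
  have csψ : HasCompactSupport fun t : ℝ => φ t (v * t) :=
    stmt18_comp_cs hsupp (g := fun t => (t, v * t)) (fun t => by
      rw [Prod.norm_def]; exact le_max_left _ _)
  have cψ : Continuous fun t : ℝ => φ t (v * t) :=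
    hFc.comp (continuous_id.prodMk (continuous_const.mul continuous_id))
  have iψ : IntegrableOn (fun t : ℝ => φ t (v * t)) (Set.Ioi 0) volume :=
    (cψ.integrable_of_hasCompactSupport csψ).integrableOn
  have iφ0 : Integrable (fun x : ℝ => φ 0 x) volume :=
    (hFc.comp (continuous_const.prodMk continuous_id)).integrable_of_hasCompactSupport
      (stmt18_comp_cs hsupp (g := fun x => ((0:ℝ), x)) (fun x => by
        rw [Prod.norm_def]; exact le_max_right _ _))
  -- flux identity
  have flux : ∀ r : ℝ, 0 ≤ r → r ≤ ρmax →
      Real.sign (r - κ) * (f r - f κ) = v * |r - κ| + v * (min κ ρmax - κ) := by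
    intro r hr0 hr1
    rw [hf r, hf κ, min_eq_left hr1]
    rcases le_or_gt κ ρmax with h | h
    · rw [min_eq_left h, sub_self, mul_zero, add_zero]
      have h3 : v * r - v * κ = v * (r - κ) := by ring
      rw [h3]
      calc Real.sign (r - κ) * (v * (r - κ)) = v * (Real.sign (r - κ) * (r - κ)) := by ring
        _ = v * |r - κ| := by rw [stmt18_sign_mul_self]
    · have hneg : r - κ < 0 := by linarith
      rw [min_eq_right h.le, Real.sign_of_neg hneg, abs_of_neg hneg]; ring
  -- pointwise rewriting of the integrand
  have hpt : ∀ t x : ℝ,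
      |ρ t x - κ| * deriv (fun s => φ s x) t
        + Real.sign (ρ t x - κ) * (f (ρ t x) - f κ) * deriv (fun y => φ t y) x
      = (|ρR - κ| + (|ρL - κ| - |ρR - κ|) * stmt18_ind (x - v * t)) * deriv (fun s => φ s x) t
        + (v * (|ρR - κ| + (|ρL - κ| - |ρR - κ|) * stmt18_ind (x - v * t))
            + v * (min κ ρmax - κ)) * deriv (fun y => φ t y) x := by
    intro t x
    rw [hρ t x, hρ₀ (x - v * t)]
    by_cases hy : x - v * t < 0
    · rw [if_pos hy, stmt18_ind_of_neg hy, flux ρL hρL.1 hρL.2]; ring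
    · rw [if_neg hy, stmt18_ind_of_nonneg hy, flux ρR hρR.1 hρR.2]; ring
  -- inner integral computation
  have hindx : ∀ t : ℝ,
      (∫ x, stmt18_ind (x - v * t) * deriv (fun y => φ t y) x) = φ t (v * t) := by
    intro t
    have hix : ∀ x : ℝ, stmt18_ind (x - v * t) * deriv (fun y => φ t y) x
        = (Set.Iio (v * t)).indicator (fun x => deriv (fun y => φ t y) x) x := by
      intro x
      rw [Set.indicator_apply]
      by_cases h : x < v * t
      · rw [if_pos (Set.mem_Iio.mpr h), stmt18_ind_of_neg (sub_neg.mpr h), one_mul]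
      · rw [if_neg (fun hh => h (Set.mem_Iio.mp hh)),
          stmt18_ind_of_nonneg (fun hh => h (sub_neg.mp hh)), zero_mul]
    simp only [hix]
    rw [integral_indicator measurableSet_Iio]
    exact FTCxIio t (v * t)
  have hinner : ∀ t : ℝ,
      (∫ x, (|ρ t x - κ| * deriv (fun s => φ s x) t
        + Real.sign (ρ t x - κ) * (f (ρ t x) - f κ) * deriv (fun y => φ t y) x))
      = |ρR - κ| * (∫ x, deriv (fun s => φ s x) t)
        + (|ρL - κ| - |ρR - κ|) * (∫ x, stmt18_ind (x - v * t) * deriv (fun s => φ s x) t)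
        + v * (|ρL - κ| - |ρR - κ|) * φ t (v * t) := by
    intro t
    simp only [hpt]
    have hre : ∀ x : ℝ,
        (|ρR - κ| + (|ρL - κ| - |ρR - κ|) * stmt18_ind (x - v * t)) * deriv (fun s => φ s x) t
          + (v * (|ρR - κ| + (|ρL - κ| - |ρR - κ|) * stmt18_ind (x - v * t))
              + v * (min κ ρmax - κ)) * deriv (fun y => φ t y) x
        = (|ρR - κ| * deriv (fun s => φ s x) t
            + (|ρL - κ| - |ρR - κ|) * (stmt18_ind (x - v * t) * deriv (fun s => φ s x) t))
          + ((v * |ρR - κ| + v * (min κ ρmax - κ)) * deriv (fun y => φ t y) x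
            + (v * (|ρL - κ| - |ρR - κ|)) * (stmt18_ind (x - v * t) * deriv (fun y => φ t y) x)) := by
      intro x; ring
    simp only [hre]
    have hA : Integrable (fun x => |ρR - κ| * deriv (fun s => φ s x) t
        + (|ρL - κ| - |ρR - κ|) * (stmt18_ind (x - v * t) * deriv (fun s => φ s x) t)) volume := by
      exact ((iDt t).const_mul _).add ((iIndDt t).const_mul _)
    have hB : Integrable (fun x => (v * |ρR - κ| + v * (min κ ρmax - κ)) * deriv (fun y => φ t y) x
        + v * (|ρL - κ| - |ρR - κ|) * (stmt18_ind (x - v * t) * deriv (fun y => φ t y) x)) volume := by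
      exact ((iDx t).const_mul _).add ((iIndDx t).const_mul _)
    rw [integral_add hA hB,
      integral_add ((iDt t).const_mul _) ((iIndDt t).const_mul _),
      integral_add ((iDx t).const_mul _) ((iIndDx t).const_mul _),
      integral_const_mul, integral_const_mul, integral_const_mul, integral_const_mul,
      FTCx0 t, hindx t]
    ring
  -- Fubini swaps
  have swap1 : (∫ t in Set.Ioi (0:ℝ), ∫ x, deriv (fun s => φ s x) t)
      = ∫ x, ∫ t in Set.Ioi (0:ℝ), deriv (fun s => φ s x) t := by
    refine integral_integral_swap ?_
    exact intDt
  have S1 : (∫ t in Set.Ioi (0:ℝ), ∫ x, deriv (fun s => φ s x) t) = -∫ x, φ 0 x := by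
    rw [swap1]
    simp only [FTCt]
    rw [integral_neg]
  have swap2 : (∫ t in Set.Ioi (0:ℝ), ∫ x, stmt18_ind (x - v * t) * deriv (fun s => φ s x) t)
      = ∫ x, ∫ t in Set.Ioi (0:ℝ), stmt18_ind (x - v * t) * deriv (fun s => φ s x) t := by
    refine integral_integral_swap ?_
    exact intIndDt
  have S2 : (∫ t in Set.Ioi (0:ℝ), ∫ x, stmt18_ind (x - v * t) * deriv (fun s => φ s x) t)
      = -(∫ x in Set.Iic (0:ℝ), φ 0 x) - v * ∫ t in Set.Ioi (0:ℝ), φ t (v * t) := by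
    rw [swap2]
    have hxin : ∀ x : ℝ,
        (∫ t in Set.Ioi (0:ℝ), stmt18_ind (x - v * t) * deriv (fun s => φ s x) t)
        = -φ (0 ⊔ x / v) x := by
      intro x
      have h1 : ∀ t : ℝ, stmt18_ind (x - v * t) * deriv (fun s => φ s x) t
          = (Set.Ioi (x / v)).indicator (fun t => deriv (fun s => φ s x) t) t := by
        intro t
        rw [Set.indicator_apply]
        by_cases h : x / v < t
        · have hlt : x - v * t < 0 := by
            have := (div_lt_iff₀ hv).mp h
            nlinarith
          rw [if_pos (Set.mem_Ioi.mpr h), stmt18_ind_of_neg hlt, one_mul]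
        · have hge : ¬ x - v * t < 0 := by
            intro hc
            exact h ((div_lt_iff₀ hv).mpr (by nlinarith))
          rw [if_neg (fun hh => h (Set.mem_Ioi.mp hh)), stmt18_ind_of_nonneg hge, zero_mul]
      simp only [h1]
      rw [setIntegral_indicator measurableSet_Ioi, Set.Ioi_inter_Ioi]
      exact FTCt (0 ⊔ x / v) x
    simp only [hxin]
    rw [integral_neg]
    have hh_cont : Continuous fun x : ℝ => φ (0 ⊔ x / v) x :=
      hFc.comp ((continuous_const.sup (continuous_id.div_const v)).prodMk continuous_id)
    have hh_cs : HasCompactSupport fun x : ℝ => φ (0 ⊔ x / v) x :=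
      stmt18_comp_cs hsupp (g := fun x => (0 ⊔ x / v, x)) (fun x => by
        rw [Prod.norm_def]; exact le_max_right _ _)
    have hh_int : Integrable (fun x : ℝ => φ (0 ⊔ x / v) x) volume :=
      hh_cont.integrable_of_hasCompactSupport hh_cs
    rw [← intervalIntegral.integral_Iic_add_Ioi hh_int.integrableOn hh_int.integrableOn]
    have e1 : (∫ x in Set.Iic (0:ℝ), φ (0 ⊔ x / v) x) = ∫ x in Set.Iic (0:ℝ), φ 0 x := by
      refine setIntegral_congr_fun measurableSet_Iic (fun x hx => ?_)
      have hx0 : x / v ≤ 0 := div_nonpos_of_nonpos_of_nonneg hx hv.le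
      rw [sup_eq_left.mpr hx0]
    have e2 : (∫ x in Set.Ioi (0:ℝ), φ (0 ⊔ x / v) x)
        = v * ∫ t in Set.Ioi (0:ℝ), φ t (v * t) := by
      have e2a : (∫ x in Set.Ioi (0:ℝ), φ (0 ⊔ x / v) x)
          = ∫ x in Set.Ioi (0:ℝ), (fun t => φ t (v * t)) (v⁻¹ * x) := by
        refine setIntegral_congr_fun measurableSet_Ioi (fun x hx => ?_)
        have hx0 : (0:ℝ) ≤ x / v := div_nonneg (le_of_lt hx) hv.le
        simp only []
        rw [sup_eq_right.mpr hx0, mul_inv_cancel_left₀ hv.ne', div_eq_inv_mul]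
      have e2b := MeasureTheory.integral_comp_mul_left_Ioi
        (fun t => φ t (v * t)) 0 (inv_pos.mpr hv)
      rw [e2a, e2b, inv_inv, mul_zero, smul_eq_mul]
    rw [e1, e2]
    ring
  -- initial-datum integral
  have S3 : (∫ x, |ρ₀ x - κ| * φ 0 x)
      = |ρR - κ| * (∫ x, φ 0 x)
        + (|ρL - κ| - |ρR - κ|) * ∫ x in Set.Iic (0:ℝ), φ 0 x := by
    have h1 : ∀ x : ℝ, |ρ₀ x - κ| * φ 0 x
        = |ρR - κ| * φ 0 x + (|ρL - κ| - |ρR - κ|) * (stmt18_ind x * φ 0 x) := by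
      intro x
      rw [hρ₀ x]
      by_cases h : x < 0
      · rw [if_pos h, stmt18_ind_of_neg h]; ring
      · rw [if_neg h, stmt18_ind_of_nonneg h]; ring
    simp only [h1]
    have iIndφ0 : Integrable (fun x => stmt18_ind x * φ 0 x) volume :=
      iφ0.bdd_mul stmt18_ind_meas.aestronglyMeasurable (Filter.Eventually.of_forall fun x => stmt18_ind_bdd _)
    have hA : Integrable (fun x => |ρR - κ| * φ 0 x) volume := iφ0.const_mul _
    have hB : Integrable (fun x => (|ρL - κ| - |ρR - κ|) * (stmt18_ind x * φ 0 x)) volume :=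
      iIndφ0.const_mul _
    rw [integral_add hA hB, integral_const_mul, integral_const_mul]
    have h2 : ∀ x : ℝ, stmt18_ind x * φ 0 x
        = (Set.Iio (0:ℝ)).indicator (fun x => φ 0 x) x := by
      intro x
      rw [Set.indicator_apply]
      by_cases h : x < 0
      · rw [if_pos (Set.mem_Iio.mpr h), stmt18_ind_of_neg h, one_mul]
      · rw [if_neg (fun hh => h (Set.mem_Iio.mp hh)), stmt18_ind_of_nonneg h, zero_mul]
    simp only [h2]
    rw [integral_indicator measurableSet_Iio, ← integral_Iic_eq_integral_Iio]
  -- main outer-integral decomposition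
  have haIt : Integrable (fun t => ∫ x, deriv (fun s => φ s x) t)
      (volume.restrict (Set.Ioi 0)) := intDt.integral_prod_left
  have haKt : Integrable (fun t => ∫ x, stmt18_ind (x - v * t) * deriv (fun s => φ s x) t)
      (volume.restrict (Set.Ioi 0)) := intIndDt.integral_prod_left
  have hI : (∫ t in Set.Ioi (0 : ℝ), ∫ x : ℝ,
        (|ρ t x - κ| * deriv (fun s => φ s x) t
          + Real.sign (ρ t x - κ) * (f (ρ t x) - f κ) * deriv (fun y => φ t y) x))
      = |ρR - κ| * (∫ t in Set.Ioi (0:ℝ), ∫ x, deriv (fun s => φ s x) t)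
        + (|ρL - κ| - |ρR - κ|)
          * (∫ t in Set.Ioi (0:ℝ), ∫ x, stmt18_ind (x - v * t) * deriv (fun s => φ s x) t)
        + v * (|ρL - κ| - |ρR - κ|) * ∫ t in Set.Ioi (0:ℝ), φ t (v * t) := by
    simp only [hinner]
    have hA : Integrable (fun t => |ρR - κ| * (∫ x, deriv (fun s => φ s x) t)
        + (|ρL - κ| - |ρR - κ|) * (∫ x, stmt18_ind (x - v * t) * deriv (fun s => φ s x) t))
        (volume.restrict (Set.Ioi 0)) := by
      exact (haIt.const_mul _).add (haKt.const_mul _)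
    have hB : Integrable (fun t => v * (|ρL - κ| - |ρR - κ|) * φ t (v * t))
        (volume.restrict (Set.Ioi 0)) := iψ.const_mul _
    rw [integral_add hA hB, integral_add (haIt.const_mul _) (haKt.const_mul _),
      integral_const_mul, integral_const_mul, integral_const_mul]
  rw [hI, S1, S2, S3]
  linarith
end
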